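/- arXiv:1104.4992 — 6 statements merged into one kernel-verified Lean document; each statement's English description precedes it below -/
import Mathlib

section
/- Let N ≥ 1, let 𝒞 be a finite set of vectors in ℝ^N, let D ⊆ ℝ^N, let (x_n) be a sequence of points of D with all coordinates strictly positive, and let f : D × 𝒞 → ℝ_{>0}. Then there exists a subsequence (x_{n_j}) of (x_n) along which 𝒞 is partitioned with respect to f; that is, there exist a partition T_1, …, T_P of 𝒞 and a constant C > 1 such that: (i) if y, z ∈ T_i for some i, then (1/C)·f(x_{n_j}, y) ≤ f(x_{n_j}, z) ≤ C·f(x_{n_j}, y) for all j; and (ii) if y ∈ T_i and z ∈ T_{i+m} for some m ≥ 1, then f(x_{n_j}, y)/f(x_{n_j}, z) → ∞ as j → ∞. -/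
open Filter

/-- For `u ∈ ℝ^N_{>0}` and `v ∈ ℝ^N`, `u^v := ∏ i, u_i ^ v_i` (real exponents). -/
noncomputable def vpow {N : ℕ} (u v : Fin N → ℝ) : ℝ := ∏ i, u i ^ v i

/-- `T : Fin P → Finset (Fin N → ℝ)` is a partition of `C` into (nonempty) tiers. -/
def IsTierPartition {N : ℕ} (C : Finset (Fin N → ℝ)) {P : ℕ}
    (T : Fin P → Finset (Fin N → ℝ)) : Prop :=
  (∀ i, (T i).Nonempty) ∧
  (∀ i j, i ≠ j → ∀ y, y ∈ T i → y ∉ T j) ∧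
  (∀ y, y ∈ C ↔ ∃ i, y ∈ T i)

/-- `C` is partitioned along the sequence `x` with respect to `f`, with tiers `T` and
constant `c > 1`:  within a tier the values of `f` are comparable up to the factor `c`
uniformly in `n`, and values in a higher tier (smaller index) dominate those in lower
tiers in the limit. -/
def PartitionedAlongWith {N : ℕ} (C : Finset (Fin N → ℝ)) (x : ℕ → Fin N → ℝ)
    (f : (Fin N → ℝ) → (Fin N → ℝ) → ℝ) {P : ℕ}
    (T : Fin P → Finset (Fin N → ℝ)) (c : ℝ) : Prop :=
  IsTierPartition C T ∧ 1 < c ∧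
  (∀ i, ∀ y ∈ T i, ∀ z ∈ T i, ∀ n,
      (1 / c) * f (x n) y ≤ f (x n) z ∧ f (x n) z ≤ c * f (x n) y) ∧
  (∀ i j : Fin P, i < j → ∀ y ∈ T i, ∀ z ∈ T j,
      Tendsto (fun n => f (x n) y / f (x n) z) atTop atTop)

/-- `C` is partitioned along `x` (with respect to `f(x, y) = x^y`). -/
noncomputable def PartitionedAlong {N : ℕ} (C : Finset (Fin N → ℝ)) (x : ℕ → Fin N → ℝ)
    {P : ℕ} (T : Fin P → Finset (Fin N → ℝ)) (c : ℝ) : Prop :=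
  PartitionedAlongWith C x (fun u v => vpow u v) T c

/-!
Compactness of `[-∞, ∞]^(𝒞 × 𝒞)` gives a subsequence along which every ratio
`f(x_n, y) / f(x_n, z)` either tends to `∞` or stays bounded. Along it, "`y` dominates `z`"
(the ratio tends to `∞`) is a strict weak order on `𝒞`: it is asymmetric, and if `y` dominates
`z` then every `w` is dominated by `y` or dominates `z`, since otherwise
`y / z = (y / w) (w / z)` would be bounded. The tiers are the level sets of the rank
`#{w | w dominates y}`, listed in increasing order.
-/

open Topology Set Finset

theorem tendsto_atTop_or_bddAbove_range_of_tendsto_coe_ereal {u : ℕ → ℝ} {L : EReal}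
    (h : Tendsto (fun n => (u n : EReal)) atTop (𝓝 L)) :
    Tendsto u atTop atTop ∨ BddAbove (range u) := by
  rcases eq_or_ne L ⊤ with rfl | hL
  · refine .inl (tendsto_atTop.2 fun b => ?_)
    filter_upwards [EReal.tendsto_nhds_top_iff_real.1 h b] with n hn
    exact (EReal.coe_lt_coe_iff.1 hn).le
  · obtain ⟨M, hLM, -⟩ := EReal.lt_iff_exists_real_btwn.1 (lt_top_iff_ne_top.2 hL)
    refine .inr (IsBoundedUnder.bddAbove_range ⟨M, ?_⟩)
    filter_upwards [h.eventually_lt_const hLM] with n hn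
    exact (EReal.coe_lt_coe_iff.1 hn).le

theorem exists_subseq_forall_tendsto_atTop_or_le {ι : Type*} [Finite ι] (u : ℕ → ι → ℝ) :
    ∃ φ : ℕ → ℕ, StrictMono φ ∧ ∃ c : ℝ,
      ∀ i, Tendsto (fun n => u (φ n) i) atTop atTop ∨ ∀ n, u (φ n) i ≤ c := by
  obtain ⟨L, -, φ, hφ, hL⟩ := isCompact_univ.tendsto_subseq
    (x := fun n i => (u n i : EReal)) fun _ => mem_univ _
  have hdich (i : ι) :
      ∃ b : ℝ, Tendsto (fun n => u (φ n) i) atTop atTop ∨ ∀ n, u (φ n) i ≤ b := by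
    rcases tendsto_atTop_or_bddAbove_range_of_tendsto_coe_ereal (tendsto_pi_nhds.1 hL i)
      with h | ⟨b, hb⟩
    · exact ⟨0, .inl h⟩
    · exact ⟨b, .inr fun n => hb (mem_range_self n)⟩
  choose b hb using hdich
  obtain ⟨c, hc⟩ := Finite.exists_le b
  exact ⟨φ, hφ, c, fun i => (hb i).imp_right fun h n => (h n).trans (hc i)⟩

section Rank

variable {α : Type*} {s : Finset α} {r : α → α → Prop} [DecidableRel r]

theorem card_filter_rel_lt_of_rel (asymm : ∀ y ∈ s, ∀ z ∈ s, r y z → ¬r z y)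
    (negTrans : ∀ y ∈ s, ∀ z ∈ s, ∀ w ∈ s, r y z → r y w ∨ r w z)
    {y z : α} (hy : y ∈ s) (hz : z ∈ s) (hyz : r y z) :
    #{w ∈ s | r w y} < #{w ∈ s | r w z} := by
  refine card_lt_card ⟨fun w hw => ?_, fun hsub => ?_⟩
  · rw [mem_filter] at hw ⊢
    exact ⟨hw.1, (negTrans w hw.1 y hy z hz hw.2).resolve_right (asymm y hy z hz hyz)⟩
  · have hyy := (mem_filter.1 (hsub (mem_filter.2 ⟨hy, hyz⟩))).2
    exact asymm y hy y hy hyy hyy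

theorem card_filter_rel_le_of_not_rel
    (negTrans : ∀ y ∈ s, ∀ z ∈ s, ∀ w ∈ s, r y z → r y w ∨ r w z)
    {y z : α} (hy : y ∈ s) (hz : z ∈ s) (hyz : ¬r y z) :
    #{w ∈ s | r w z} ≤ #{w ∈ s | r w y} := by
  refine card_le_card fun w hw => ?_
  rw [mem_filter] at hw ⊢
  exact ⟨hw.1, (negTrans w hw.1 z hz y hy hw.2).resolve_right hyz⟩

end Rank

section Tiers

variable {α : Type*}

def rankTiers (s : Finset α) (ρ : α → ℕ) : Fin #(s.image ρ) → Finset α :=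
  fun i => {y ∈ s | ρ y = (s.image ρ).orderEmbOfFin rfl i}

theorem mem_rankTiers {s : Finset α} {ρ : α → ℕ} {i : Fin #(s.image ρ)} {y : α} :
    y ∈ rankTiers s ρ i ↔ y ∈ s ∧ ρ y = (s.image ρ).orderEmbOfFin rfl i :=
  mem_filter

theorem isTierPartition_rankTiers {N : ℕ} (C : Finset (Fin N → ℝ)) (ρ : (Fin N → ℝ) → ℕ) :
    IsTierPartition C (rankTiers C ρ) := by
  refine ⟨fun i => ?_, fun i j hij y hi hj => ?_, fun y => ⟨fun hy => ?_, ?_⟩⟩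
  · obtain ⟨y, hy, hρ⟩ := mem_image.1 ((C.image ρ).orderEmbOfFin_mem rfl i)
    exact ⟨y, mem_rankTiers.2 ⟨hy, hρ⟩⟩
  · exact hij (((C.image ρ).orderEmbOfFin rfl).injective
      ((mem_rankTiers.1 hi).2.symm.trans (mem_rankTiers.1 hj).2))
  · obtain ⟨i, hi⟩ : ρ y ∈ range ((C.image ρ).orderEmbOfFin rfl) := by
      rw [range_orderEmbOfFin]
      exact mem_image_of_mem ρ hy
    exact ⟨i, mem_rankTiers.2 ⟨hy, hi.symm⟩⟩
  · rintro ⟨i, hi⟩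
    exact (mem_rankTiers.1 hi).1

theorem lt_of_mem_rankTiers {s : Finset α} {ρ : α → ℕ} {i j : Fin #(s.image ρ)} (hij : i < j)
    {y z : α} (hy : y ∈ rankTiers s ρ i) (hz : z ∈ rankTiers s ρ j) : ρ y < ρ z := by
  rw [(mem_rankTiers.1 hy).2, (mem_rankTiers.1 hz).2]
  exact ((s.image ρ).orderEmbOfFin rfl).strictMono hij

end Tiers

section Ratios

variable {ι : Type*} {l : Filter ι} [l.NeBot] {a b d : ι → ℝ}

theorem not_tendsto_div_atTop_of_tendsto_div_atTop
    (h : Tendsto (fun n => a n / b n) l atTop) : ¬Tendsto (fun n => b n / a n) l atTop := by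
  refine not_tendsto_atTop_of_tendsto_nhds (a := 0) ?_
  simpa only [Function.comp_def, inv_div] using tendsto_inv_atTop_zero.comp h

theorem not_tendsto_div_atTop_of_div_le (hb : ∀ n, 0 < b n)
    (hd : ∀ n, 0 < d n) {c : ℝ} (hab : ∀ n, a n / b n ≤ c) (hbd : ∀ n, b n / d n ≤ c) :
    ¬Tendsto (fun n => a n / d n) l atTop := by
  intro h
  obtain ⟨n, hn⟩ := (h.eventually_gt_atTop (c * c)).exists
  have hc : 0 ≤ c := (div_pos (hb n) (hd n)).le.trans (hbd n)
  have : a n / d n ≤ c * c := by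
    rw [← div_mul_div_cancel₀ (hb n).ne']
    exact mul_le_mul (hab n) (hbd n) (div_pos (hb n) (hd n)).le hc
  exact this.not_gt hn

end Ratios

theorem partitionedAlongWith_of_forall_tendsto_atTop_or_le {N : ℕ} {C : Finset (Fin N → ℝ)}
    {x : ℕ → Fin N → ℝ} {f : (Fin N → ℝ) → (Fin N → ℝ) → ℝ}
    (hpos : ∀ n, ∀ y ∈ C, 0 < f (x n) y) {c : ℝ}
    (hdich : ∀ y ∈ C, ∀ z ∈ C, Tendsto (fun n => f (x n) y / f (x n) z) atTop atTop ∨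
      ∀ n, f (x n) y / f (x n) z ≤ c) :
    ∃ (P : ℕ) (T : Fin P → Finset (Fin N → ℝ)) (c' : ℝ), PartitionedAlongWith C x f T c' := by
  classical
  set r : (Fin N → ℝ) → (Fin N → ℝ) → Prop :=
    fun y z => Tendsto (fun n => f (x n) y / f (x n) z) atTop atTop
  have asymm : ∀ y ∈ C, ∀ z ∈ C, r y z → ¬r z y :=
    fun _ _ _ _ => not_tendsto_div_atTop_of_tendsto_div_atTop
  have negTrans : ∀ y ∈ C, ∀ z ∈ C, ∀ w ∈ C, r y z → r y w ∨ r w z := by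
    intro y hy z hz w hw hyz
    by_contra! h
    exact not_tendsto_div_atTop_of_div_le (fun n => hpos n w hw) (fun n => hpos n z hz)
      ((hdich y hy w hw).resolve_left h.1) ((hdich w hw z hz).resolve_left h.2) hyz
  set ρ : (Fin N → ℝ) → ℕ := fun y => #{w ∈ C | r w y}
  have ratio_le {y z : Fin N → ℝ} (hy : y ∈ C) (hz : z ∈ C) (hρ : ρ y = ρ z) (n : ℕ) :
      f (x n) y / f (x n) z ≤ max c 2 := by
    have hyz : ¬r y z := fun h => (card_filter_rel_lt_of_rel asymm negTrans hy hz h).ne hρ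
    exact ((hdich y hy z hz).resolve_left hyz n).trans (le_max_left c 2)
  have hc : 1 < max c 2 := one_lt_two.trans_le (le_max_right c 2)
  refine ⟨_, rankTiers C ρ, max c 2, isTierPartition_rankTiers C ρ, hc, ?_, ?_⟩
  · intro i y hy z hz n
    obtain ⟨hyC, hρy⟩ := mem_rankTiers.1 hy
    obtain ⟨hzC, hρz⟩ := mem_rankTiers.1 hz
    have hρ : ρ y = ρ z := hρy.trans hρz.symm
    constructor
    · rw [one_div_mul_eq_div, div_le_iff₀ (zero_lt_one.trans hc), mul_comm]
      exact (div_le_iff₀ (hpos n z hzC)).1 (ratio_le hyC hzC hρ n)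
    · exact (div_le_iff₀ (hpos n y hyC)).1 (ratio_le hzC hyC hρ.symm n)
  · intro i j hij y hy z hz
    by_contra hyz
    exact (card_filter_rel_le_of_not_rel negTrans (mem_rankTiers.1 hy).1 (mem_rankTiers.1 hz).1
      hyz).not_gt (lt_of_mem_rankTiers hij hy hz)

theorem exists_subsequence_partitionedAlongWith_general
    {N : ℕ} (C : Finset (Fin N → ℝ)) (D : Set (Fin N → ℝ))
    (x : ℕ → Fin N → ℝ) (hxD : ∀ n, x n ∈ D)
    (f : (Fin N → ℝ) → (Fin N → ℝ) → ℝ)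
    (hf : ∀ z ∈ D, ∀ y ∈ C, 0 < f z y) :
    ∃ φ : ℕ → ℕ, StrictMono φ ∧
      ∃ (P : ℕ) (T : Fin P → Finset (Fin N → ℝ)) (c : ℝ),
        PartitionedAlongWith C (fun j => x (φ j)) f T c := by
  obtain ⟨φ, hφ, c, hc⟩ :=
    exists_subseq_forall_tendsto_atTop_or_le fun n (p : C × C) => f (x n) p.1 / f (x n) p.2
  exact ⟨φ, hφ, partitionedAlongWith_of_forall_tendsto_atTop_or_le
    (fun n => hf _ (hxD (φ n))) fun y hy z hz => hc (⟨y, hy⟩, ⟨z, hz⟩)⟩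

/-- **Lemma (existence of a partitioning subsequence).**
Let `N ≥ 1`, let `𝒞` be a finite set of vectors in `ℝ^N`, let `D ⊆ ℝ^N`, let `(x_n)` be a
sequence of points of `D` with all coordinates strictly positive, and let
`f : D × 𝒞 → ℝ_{>0}`.  Then there is a subsequence of `(x_n)` along which `𝒞` is
partitioned with respect to `f`. -/
theorem exists_subsequence_partitionedAlongWith
    {N : ℕ} (hN : 1 ≤ N) (C : Finset (Fin N → ℝ)) (D : Set (Fin N → ℝ))
    (x : ℕ → Fin N → ℝ) (hxD : ∀ n, x n ∈ D) (hxpos : ∀ n i, 0 < x n i)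
    (f : (Fin N → ℝ) → (Fin N → ℝ) → ℝ)
    (hf : ∀ z ∈ D, ∀ y ∈ C, 0 < f z y) :
    ∃ φ : ℕ → ℕ, StrictMono φ ∧
      ∃ (P : ℕ) (T : Fin P → Finset (Fin N → ℝ)) (c : ℝ),
        PartitionedAlongWith C (fun j => x (φ j)) f T c :=
  exists_subsequence_partitionedAlongWith_general C D x hxD f hf
end

section
/- (Stiemke's Theorem) Let u_1, …, u_n ∈ ℝ^m. Then exactly one of the following holds: (a) there exists c ∈ ℝ^n such that (Σ_{i=1}^n c_i u_i)_j ≤ 0 for every j ∈ {1,…,m}, with at least one of these inequalities strict; or (b) there exists w ∈ ℝ^m with w_j > 0 for every j such that w·u_i = 0 for each i ∈ {1,…,n}. -/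
/-!
If some `c` gives `∑ cᵢ uᵢ ≤ 0` with a strict coordinate, pairing with a strictly positive `w`
orthogonal to every `uᵢ` gives `0 = w ⬝ᵥ ∑ cᵢ uᵢ < 0`, so (a) and (b) exclude each other.
If no such `c` exists, the span `V` of the `uᵢ` misses the standard simplex (a point of
`V ∩ Δ` is `∑ cᵢ uᵢ`, and `-c` would witness (a)). Separating the closed subspace `V` from the
compact simplex by a functional `f`, `f` is bounded above on `V`, hence vanishes on it, and it is
positive on the vertices `eⱼ` of `Δ`; the vector `w j := f eⱼ` is the witness of (b).
-/

open Finset Matrix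

variable {ι : Type*} [Fintype ι]

lemma dotProduct_neg_of_pos_of_nonpos {w x : ι → ℝ} (hw : ∀ j, 0 < w j) (hx : ∀ j, x j ≤ 0)
    (hx' : ∃ j, x j < 0) : w ⬝ᵥ x < 0 := by
  obtain ⟨j₀, hj₀⟩ := hx'
  calc w ⬝ᵥ x = ∑ j, w j * x j := rfl
    _ < ∑ _j : ι, (0 : ℝ) :=
      sum_lt_sum (fun j _ => mul_nonpos_of_nonneg_of_nonpos (hw j).le (hx j))
        ⟨j₀, mem_univ _, mul_neg_of_pos_of_neg (hw j₀) hj₀⟩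
    _ = 0 := sum_const_zero

lemma LinearMap.eq_zero_of_forall_mem_submodule_lt {R M : Type*} [Field R] [Preorder R]
    [AddCommGroup M] [Module R M] {f : M →ₗ[R] R} {V : Submodule R M} {a : R}
    (hf : ∀ x ∈ V, f x < a) {x : M} (hx : x ∈ V) : f x = 0 := by
  by_contra hfx
  have haa := hf ((a / f x) • x) (V.smul_mem _ hx)
  rw [map_smul, smul_eq_mul, div_mul_cancel₀ _ hfx] at haa
  exact lt_irrefl a haa

lemma exists_pos_dotProduct_eq_zero_of_disjoint_stdSimplex {V : Submodule ℝ (ι → ℝ)}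
    (hV : Disjoint (V : Set (ι → ℝ)) (stdSimplex ℝ ι)) :
    ∃ w : ι → ℝ, (∀ j, 0 < w j) ∧ ∀ x ∈ V, w ⬝ᵥ x = 0 := by
  classical
  obtain ⟨f, a, b, hfV, hab, hfΔ⟩ := geometric_hahn_banach_closed_compact V.convex
    V.closed_of_finiteDimensional (convex_stdSimplex ℝ ι) (isCompact_stdSimplex ℝ ι) hV
  have hf_zero : ∀ x ∈ V, f x = 0 := fun x hx =>
    LinearMap.eq_zero_of_forall_mem_submodule_lt (f := f.toLinearMap) hfV hx
  have ha : 0 < a := by simpa using hfV 0 V.zero_mem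
  refine ⟨fun j => f fun k => if j = k then 1 else 0, fun j => ?_, fun x hx => ?_⟩
  · linarith [hfΔ _ (ite_eq_mem_stdSimplex ℝ j)]
  · calc _ = ∑ j, x j • f (fun k => if j = k then 1 else 0) := by
          simp only [dotProduct, smul_eq_mul, mul_comm]
      _ = f x := (f.toLinearMap.pi_apply_eq_sum_univ x).symm
      _ = 0 := hf_zero x hx

lemma disjoint_span_stdSimplex {κ : Type*} [Fintype κ] {u : κ → ι → ℝ}
    (hu : ¬∃ c : κ → ℝ, (∀ j, (∑ i, c i • u i) j ≤ 0) ∧ ∃ j, (∑ i, c i • u i) j < 0) :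
    Disjoint (Submodule.span ℝ (Set.range u) : Set (ι → ℝ)) (stdSimplex ℝ ι) := by
  rw [Set.disjoint_left]
  rintro x hxV ⟨hx_nonneg, hx_sum⟩
  obtain ⟨c, rfl⟩ := (Submodule.mem_span_range_iff_exists_fun ℝ).1 hxV
  obtain ⟨j, -, hj⟩ := exists_lt_of_sum_lt (s := univ) (f := fun _ => (0 : ℝ))
    (g := fun j => (∑ i, c i • u i) j) (by rw [sum_const_zero, hx_sum]; exact one_pos)
  exact hu ⟨-c, fun j => by simpa using hx_nonneg j, j, by simpa using hj⟩

/-- **Stiemke's Theorem.**  Given `u_1, …, u_n ∈ ℝ^m`, exactly one of the following holds: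
(a) there is `c ∈ ℝ^n` with `(Σ_i c_i u_i)_j ≤ 0` for every `j`, and at least one of these
inequalities strict; or (b) there is `w ∈ ℝ^m` with all coordinates strictly positive such
that `w · u_i = 0` for every `i`. -/
theorem stiemke (n m : ℕ) (u : Fin n → Fin m → ℝ) :
    Xor'
      (∃ c : Fin n → ℝ,
        (∀ j, (∑ i, c i • u i) j ≤ 0) ∧ (∃ j, (∑ i, c i • u i) j < 0))
      (∃ w : Fin m → ℝ, (∀ j, 0 < w j) ∧ ∀ i, ∑ j, w j * u i j = 0) := by
  by_cases hA : ∃ c : Fin n → ℝ,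
      (∀ j, (∑ i, c i • u i) j ≤ 0) ∧ (∃ j, (∑ i, c i • u i) j < 0)
  · refine Or.inl ⟨hA, ?_⟩
    rintro ⟨w, hw, hwu⟩
    obtain ⟨c, hle, hlt⟩ := hA
    have hwu_dot : ∀ i, w ⬝ᵥ u i = 0 := hwu
    have hzero : w ⬝ᵥ ∑ i, c i • u i = 0 := by
      simp [dotProduct_sum, dotProduct_smul, hwu_dot]
    exact (dotProduct_neg_of_pos_of_nonpos hw hle hlt).ne hzero
  · obtain ⟨w, hw, hwV⟩ := exists_pos_dotProduct_eq_zero_of_disjoint_stdSimplex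
      (disjoint_span_stdSimplex hA)
    exact Or.inr ⟨⟨w, hw, fun i => hwV _ (Submodule.subset_span ⟨i, rfl⟩)⟩, hA⟩
end

section
/- Let u_1, …, u_n ∈ ℝ^m, let U ⊆ {1,…,m}, and let V = {1,…,m} \ U. Then exactly one of the following holds: (a) there exists c ∈ ℝ^n such that (Σ_{i=1}^n c_i u_i)_j ≤ 0 for every j ∈ U and (Σ_{i=1}^n c_i u_i)_j ≥ 0 for every j ∈ V, with at least one of these inequalities strict; or (b) there exists w ∈ ℝ^m with w_j > 0 for every j ∈ U and w_j < 0 for every j ∈ V such that w·u_i = 0 for each i ∈ {1,…,n}. -/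
/-!
Flipping the sign of every coordinate outside `U` turns the corollary into Stiemke's theorem for
the subspace `L` spanned by the flipped vectors: either `L` contains a nonzero vector `x ≤ 0`, or
some strictly positive `w` is orthogonal to `L`. Both cannot hold, since `w ⬝ᵥ x` would be
negative. If `L` contains no such `x`, then `L` misses the standard simplex (as `-L = L`), and a
linear functional strictly separating the compact simplex from `L` must vanish on `L` and be
negative at every basis vector; its negative is the required `w`.
-/

open Finset Matrix

theorem LinearMap.apply_eq_zero_of_forall_lt_apply {E : Type*} [AddCommGroup E] [Module ℝ E]
    (f : E →ₗ[ℝ] ℝ) {L : Submodule ℝ E} {b : ℝ} (hb : ∀ y ∈ L, b < f y) {x : E} (hx : x ∈ L) :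
    f x = 0 := by
  by_contra hne
  have hscale : f (((b - 1) / f x) • x) = b - 1 := by
    rw [map_smul, smul_eq_mul, div_mul_cancel₀ _ hne]
  linarith [hb _ (L.smul_mem ((b - 1) / f x) hx)]

theorem mul_dotProduct_eq_dotProduct_mul {ι R : Type*} [Fintype ι] [CommSemiring R]
    (s w x : ι → R) : (s * w) ⬝ᵥ x = w ⬝ᵥ (s * x) :=
  Finset.sum_congr rfl fun j _ => by simp only [Pi.mul_apply]; ring

section Stiemke

variable {ι : Type*} [Fintype ι]

theorem eq_zero_of_nonpos_of_dotProduct_eq_zero {w x : ι → ℝ} (hw : ∀ j, 0 < w j) (hx : x ≤ 0)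
    (h : w ⬝ᵥ x = 0) : x = 0 := by
  have hterm : ∀ j ∈ univ, w j * x j = 0 :=
    (sum_eq_zero_iff_of_nonpos fun j _ => mul_nonpos_of_nonneg_of_nonpos (hw j).le (hx j)).1 h
  funext j
  exact (mul_eq_zero.1 (hterm j (mem_univ j))).resolve_left (hw j).ne'

theorem exists_pos_dotProduct_eq_zero (L : Submodule ℝ (ι → ℝ)) (hL : ∀ x ∈ L, ¬x < 0) :
    ∃ w : ι → ℝ, (∀ j, 0 < w j) ∧ ∀ x ∈ L, w ⬝ᵥ x = 0 := by
  classical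
  have hdisj : Disjoint (stdSimplex ℝ ι) (L : Set (ι → ℝ)) := by
    refine Set.disjoint_left.2 fun x ⟨hx0, hx1⟩ hxL => hL (-x) (L.neg_mem hxL) ?_
    obtain ⟨j, -, hj⟩ : ∃ j ∈ univ, (0 : ι → ℝ) j < x j :=
      exists_lt_of_sum_lt (by simp only [Pi.zero_apply, sum_const_zero, hx1, zero_lt_one])
    exact Pi.lt_def.2 ⟨neg_nonpos.2 hx0, j, neg_neg_of_pos hj⟩
  obtain ⟨f, a, b, hfs, hab, hfL⟩ :=
    geometric_hahn_banach_compact_closed (convex_stdSimplex ℝ ι) (isCompact_stdSimplex ℝ ι)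
      L.convex L.closed_of_finiteDimensional hdisj
  have hf : ∀ x ∈ L, f x = 0 := fun x hx =>
    (f : (ι → ℝ) →ₗ[ℝ] ℝ).apply_eq_zero_of_forall_lt_apply hfL hx
  have hb : b < 0 := by simpa using hfL 0 L.zero_mem
  set v : ι → ℝ := fun j => f fun k => if j = k then 1 else 0
  have hfv : ∀ x, f x = v ⬝ᵥ x := fun x => by
    rw [dotProduct_comm]
    exact (f : (ι → ℝ) →ₗ[ℝ] ℝ).pi_apply_eq_sum_univ x
  refine ⟨-v, fun j => neg_pos.2 ((hfs _ (ite_eq_mem_stdSimplex ℝ j)).trans (hab.trans hb)),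
    fun x hx => ?_⟩
  rw [neg_dotProduct, ← hfv, hf x hx, neg_zero]

theorem stiemke_s2 (L : Submodule ℝ (ι → ℝ)) :
    Xor (∃ x ∈ L, x < 0) (∃ w : ι → ℝ, (∀ j, 0 < w j) ∧ ∀ x ∈ L, w ⬝ᵥ x = 0) := by
  refine xor_iff_not_iff'.2
    ⟨fun h => exists_pos_dotProduct_eq_zero L fun x hx hneg => h ⟨x, hx, hneg⟩, ?_⟩
  rintro ⟨w, hw, hwL⟩ ⟨x, hxL, hx⟩
  exact hx.ne (eq_zero_of_nonpos_of_dotProduct_eq_zero hw hx.le (hwL x hxL))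

theorem stiemke_family {κ : Type*} [Fintype κ] (v : κ → ι → ℝ) :
    Xor (∃ c : κ → ℝ, ∑ i, c i • v i < 0)
      (∃ w : ι → ℝ, (∀ j, 0 < w j) ∧ ∀ i, w ⬝ᵥ v i = 0) := by
  have hspan : ∀ w : ι → ℝ,
      (∀ x ∈ Submodule.span ℝ (Set.range v), w ⬝ᵥ x = 0) ↔ ∀ i, w ⬝ᵥ v i = 0 := by
    refine fun w => ⟨fun h i => h _ (Submodule.subset_span ⟨i, rfl⟩), fun h x hx => ?_⟩
    obtain ⟨c, rfl⟩ := Submodule.mem_span_range_iff_exists_fun ℝ |>.1 hx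
    simp only [dotProduct_sum, dotProduct_smul, h, smul_zero, sum_const_zero]
  have h := stiemke_s2 (Submodule.span ℝ (Set.range v))
  simp only [hspan] at h
  simpa only [Submodule.mem_span_range_iff_exists_fun, exists_exists_eq_and] using h

end Stiemke

open Classical in
noncomputable def Set.signs {ι : Type*} (U : Set ι) : ι → ℝ := fun j => if j ∈ U then 1 else -1

section Signs

variable {ι : Type*} (U : Set ι)

theorem Set.signs_mul_signs : U.signs * U.signs = 1 := by
  funext j
  by_cases hj : j ∈ U <;> simp [Set.signs, hj]

theorem Set.signs_mul_signs_mul (w : ι → ℝ) : U.signs * (U.signs * w) = w := by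
  rw [← mul_assoc, U.signs_mul_signs, one_mul]

theorem Set.signs_mul_involutive : Function.Involutive (U.signs * ·) :=
  U.signs_mul_signs_mul

theorem Set.signs_mul_dotProduct_signs_mul [Fintype ι] (w x : ι → ℝ) :
    (U.signs * w) ⬝ᵥ (U.signs * x) = w ⬝ᵥ x := by
  rw [mul_dotProduct_eq_dotProduct_mul, U.signs_mul_signs_mul]

variable {U}

open Classical in
theorem Set.signs_mul_apply (x : ι → ℝ) (j : ι) :
    (U.signs * x) j = if j ∈ U then x j else -x j := by
  by_cases hj : j ∈ U <;> simp [Set.signs, hj]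

theorem Set.signs_mul_lt_zero_iff {x : ι → ℝ} :
    U.signs * x < 0 ↔ (∀ j ∈ U, x j ≤ 0) ∧ (∀ j ∉ U, 0 ≤ x j) ∧
      ((∃ j ∈ U, x j < 0) ∨ ∃ j ∉ U, 0 < x j) := by
  simp only [Pi.lt_def, Pi.le_def, Set.signs_mul_apply, Pi.zero_apply]
  grind

theorem Set.forall_signs_mul_pos_iff {w : ι → ℝ} :
    (∀ j, 0 < (U.signs * w) j) ↔ (∀ j ∈ U, 0 < w j) ∧ ∀ j ∉ U, w j < 0 := by
  simp only [Set.signs_mul_apply]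
  grind

end Signs

/-- **Corollary of Stiemke's Theorem.**  Given `u_1, …, u_n ∈ ℝ^m` and `U ⊆ {1,…,m}` with
complement `V`, exactly one of the following holds: (a) there is `c ∈ ℝ^n` with
`(Σ_i c_i u_i)_j ≤ 0` for `j ∈ U` and `(Σ_i c_i u_i)_j ≥ 0` for `j ∈ V`, with at least one
of these inequalities strict; or (b) there is `w ∈ ℝ^m` with `w_j > 0` for `j ∈ U` and
`w_j < 0` for `j ∈ V` such that `w · u_i = 0` for every `i`. -/
theorem stiemke_corollary (n m : ℕ) (u : Fin n → Fin m → ℝ) (U : Set (Fin m)) :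
    Xor'
      (∃ c : Fin n → ℝ,
        (∀ j ∈ U, (∑ i, c i • u i) j ≤ 0) ∧
        (∀ j ∉ U, 0 ≤ (∑ i, c i • u i) j) ∧
        ((∃ j ∈ U, (∑ i, c i • u i) j < 0) ∨ (∃ j ∉ U, 0 < (∑ i, c i • u i) j)))
      (∃ w : Fin m → ℝ,
        (∀ j ∈ U, 0 < w j) ∧ (∀ j ∉ U, w j < 0) ∧ ∀ i, ∑ j, w j * u i j = 0) := by
  have hsum : ∀ c : Fin n → ℝ, ∑ i, c i • (U.signs * u i) = U.signs * ∑ i, c i • u i :=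
    fun c => by simp only [mul_sum, mul_smul_comm]
  have h := stiemke_family fun i => U.signs * u i
  rw [U.signs_mul_involutive.surjective.exists] at h
  simp only [hsum, Set.signs_mul_lt_zero_iff, Set.forall_signs_mul_pos_iff,
    Set.signs_mul_dotProduct_signs_mul, and_assoc] at h
  exact h
end

section
/- Let 𝒞 be a finite set of vectors in ℝ^N and let (x_n) be a partially monotonic sequence of points in ℝ^N_{>0} such that lim_{n→∞} x_{n,i} ∈ {0, ∞} for at least one index i ∈ {1,…,N}. Set U = {i : lim_{n→∞} x_{n,i} = 0} and V = {j : lim_{n→∞} x_{n,j} = ∞}. Suppose 𝒞 is partitioned along (x_n) with tiers T_1, …, T_P and constant C > 1. Then there exists a conservation relation w ∈ ℝ^N that respects the triple (U, V, {T_i}). -/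
open Filter

/-- A positive sequence `(x_n)` in `ℝ^N_{>0}` is partially monotonic: the coordinates with
`liminf_n x_{n,i} = 0` (equivalently, frequently below any `ε > 0`) are nonincreasing, and
those with `limsup_n x_{n,j} = ∞` (equivalently, frequently above any `M`) are
nondecreasing. -/
def PartiallyMonotonic {N : ℕ} (x : ℕ → Fin N → ℝ) : Prop :=
  (∀ i, (∀ ε > (0 : ℝ), ∃ᶠ n in atTop, x n i < ε) → ∀ n, x (n + 1) i ≤ x n i) ∧
  (∀ j, (∀ M : ℝ, ∃ᶠ n in atTop, M < x n j) → ∀ n, x n j ≤ x (n + 1) j)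

/-- `w` is a conservation relation that respects the triple `(U, V, {T_i})`:
`U` is the positive support of `w`, `V` is its negative support, and `w · (y − z) = 0`
whenever `y` and `z` lie in a common tier. -/
def ConservationRelation {N : ℕ} (w : Fin N → ℝ) (U V : Set (Fin N))
    {P : ℕ} (T : Fin P → Finset (Fin N → ℝ)) : Prop :=
  {i | 0 < w i} = U ∧ {i | w i < 0} = V ∧
  ∀ i, ∀ y ∈ T i, ∀ z ∈ T i, ∑ j, w j * (y j - z j) = 0

/-!
Pass to log-coordinates `v n = -log (x n) ∈ ℝ^N` and let `K` be the span of the differences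
`y - z` of vectors in a common tier together with the unit vectors `e k` for `k ∉ U ∪ V`.
Pairing `v n` with an element of `K` stays bounded in `n`: against `y - z` it is
`log (x_n^z / x_n^y) ∈ [-log c, log c]`, and by partial monotonicity a coordinate with neither
limit stays in a compact subset of `(0, ∞)`. Hence the orthogonal projection of `v n` onto `K` is
bounded, so `w = v n - proj_K (v n) ∈ Kᗮ` is, for large `n`, positive on `U` (where `v n → ∞`)
and negative on `V` (where `v n → -∞`), and it vanishes off `U ∪ V` because `e k ∈ K` there.
-/

open Asymptotics Topology

section InnerProduct

variable {E α : Type*} [NormedAddCommGroup E] [InnerProductSpace ℝ E] {l : Filter α} {v : α → E}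

theorem isBigO_inner_of_mem_span {S : Set E}
    (hS : ∀ d ∈ S, (fun n => inner ℝ d (v n)) =O[l] (fun _ => (1 : ℝ))) {d : E}
    (hd : d ∈ Submodule.span ℝ S) : (fun n => inner ℝ d (v n)) =O[l] (fun _ => (1 : ℝ)) := by
  induction hd using Submodule.span_induction with
  | mem d hd => exact hS d hd
  | zero => simpa only [inner_zero_left] using isBigO_zero _ _
  | add d e _ _ hd he => simpa only [inner_add_left] using hd.add he
  | smul a d _ hd => simpa only [real_inner_smul_left] using hd.const_mul_left a

theorem Submodule.isBigO_starProjection (K : Submodule ℝ E) [FiniteDimensional ℝ K]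
    (hK : ∀ d ∈ K, (fun n => inner ℝ d (v n)) =O[l] (fun _ => (1 : ℝ))) :
    (fun n => K.starProjection (v n)) =O[l] (fun _ => (1 : ℝ)) := by
  let b := stdOrthonormalBasis ℝ K
  simp only [K.starProjection_apply, b.orthogonalProjectionOnto_apply_eq_sum, Submodule.coe_sum,
    Submodule.coe_smul]
  refine IsBigO.fun_sum fun i _ => ?_
  have hb : (fun _ => (b i : E)) =O[l] (fun _ => (1 : ℝ)) := isBigO_const_const _ one_ne_zero l
  simpa using (hK _ (b i).2).smul hb

end InnerProduct

theorem exists_mem_orthogonal_with_signs {ι α : Type*} [Fintype ι] [DecidableEq ι]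
    {l : Filter α} [l.NeBot] (K : Submodule ℝ (EuclideanSpace ℝ ι)) (U V : Set ι)
    {v : α → EuclideanSpace ℝ ι}
    (hK : ∀ d ∈ K, (fun n => inner ℝ d (v n)) =O[l] (fun _ => (1 : ℝ)))
    (hU : ∀ i ∈ U, Tendsto (fun n => v n i) l atTop)
    (hV : ∀ i ∈ V, Tendsto (fun n => v n i) l atBot)
    (hsingle : ∀ i, i ∉ U → i ∉ V → EuclideanSpace.single i 1 ∈ K) :
    ∃ w ∈ Kᗮ, {i | 0 < w i} = U ∧ {i | w i < 0} = V := by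
  set q := fun n => v n - K.starProjection (v n)
  obtain ⟨B, hB⟩ := ((isBigO_one_iff ℝ).1 (K.isBigO_starProjection hK)).eventually_le
  have hcoord : ∀ i, ∀ᶠ n in l, |q n i - v n i| ≤ B := fun i =>
    hB.mono fun n hn => by simpa [q] using (PiLp.norm_apply_le _ i).trans hn
  have hposU : ∀ᶠ n in l, ∀ i ∈ U, 0 < q n i := eventually_all.2 fun i =>
    eventually_imp_distrib_left.2 fun hi => by
      filter_upwards [(hU i hi).eventually_gt_atTop B, hcoord i] with n hv hqv
      linarith [(abs_le.1 hqv).1]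
  have hnegV : ∀ᶠ n in l, ∀ i ∈ V, q n i < 0 := eventually_all.2 fun i =>
    eventually_imp_distrib_left.2 fun hi => by
      filter_upwards [(hV i hi).eventually_lt_atBot (-B), hcoord i] with n hv hqv
      linarith [(abs_le.1 hqv).2]
  obtain ⟨n, hnU, hnV⟩ := (hposU.and hnegV).exists
  have hq : q n ∈ Kᗮ := K.sub_starProjection_mem_orthogonal (v n)
  have hzero : ∀ i, i ∉ U → i ∉ V → q n i = 0 := fun i hiU hiV => by
    simpa [EuclideanSpace.inner_single_left] using (K.mem_orthogonal _).1 hq _ (hsingle i hiU hiV)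
  refine ⟨q n, hq, Set.ext fun i => ?_, Set.ext fun i => ?_⟩ <;>
    grind

theorem abs_log_sub_log_le_log {a b c : ℝ} (ha : 0 < a) (hb : 0 < b) (hc : 0 < c)
    (hab : a ≤ c * b) (hba : b ≤ c * a) : |Real.log b - Real.log a| ≤ Real.log c := by
  have h₁ := Real.log_le_log ha hab
  have h₂ := Real.log_le_log hb hba
  rw [Real.log_mul hc.ne' hb.ne'] at h₁
  rw [Real.log_mul hc.ne' ha.ne'] at h₂
  exact abs_sub_le_iff.2 ⟨by linarith, by linarith⟩

section

variable {N : ℕ}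

theorem vpow_pos {u : Fin N → ℝ} (hu : ∀ i, 0 < u i) (v : Fin N → ℝ) : 0 < vpow u v :=
  Finset.prod_pos fun i _ => Real.rpow_pos_of_pos (hu i) _

theorem log_vpow {u : Fin N → ℝ} (hu : ∀ i, 0 < u i) (v : Fin N → ℝ) :
    Real.log (vpow u v) = ∑ i, v i * Real.log (u i) := by
  rw [vpow, Real.log_prod fun i _ => (Real.rpow_pos_of_pos (hu i) _).ne']
  exact Finset.sum_congr rfl fun i _ => Real.log_rpow (hu i) _

theorem inner_toLp_neg_log {u : Fin N → ℝ} (hu : ∀ i, 0 < u i) (v : Fin N → ℝ) :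
    inner ℝ (WithLp.toLp 2 v : EuclideanSpace ℝ (Fin N)) (WithLp.toLp 2 fun i => -Real.log (u i))
      = -Real.log (vpow u v) := by
  simp [EuclideanSpace.inner_eq_star_dotProduct, dotProduct, log_vpow hu, mul_comm]

theorem PartitionedAlong.isBigO_inner_sub {C : Finset (Fin N → ℝ)} {x : ℕ → Fin N → ℝ} {P : ℕ}
    {T : Fin P → Finset (Fin N → ℝ)} {c : ℝ} (h : PartitionedAlong C x T c)
    (hx : ∀ n i, 0 < x n i) {i : Fin P} {y z : Fin N → ℝ} (hy : y ∈ T i) (hz : z ∈ T i) :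
    (fun n => inner ℝ (WithLp.toLp 2 (y - z) : EuclideanSpace ℝ (Fin N))
      (WithLp.toLp 2 fun k => -Real.log (x n k))) =O[atTop] (fun _ => (1 : ℝ)) := by
  obtain ⟨-, hc, hcomp, -⟩ := h
  have hc₀ : 0 < c := one_pos.trans hc
  refine (isBigO_one_iff ℝ).2 (isBoundedUnder_of_eventually_le (a := Real.log c) (.of_forall ?_))
  intro n
  obtain ⟨hzy, hyz⟩ := hcomp i y hy z hz n
  rw [WithLp.toLp_sub, inner_sub_left, inner_toLp_neg_log (hx n), inner_toLp_neg_log (hx n),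
    neg_sub_neg, Real.norm_eq_abs]
  refine abs_log_sub_log_le_log (vpow_pos (hx n) y) (vpow_pos (hx n) z) hc₀ ?_ hyz
  rwa [one_div_mul_eq_div, div_le_iff₀' hc₀] at hzy

variable {x : ℕ → Fin N → ℝ} {k : Fin N}

theorem PartiallyMonotonic.exists_eventually_le_of_not_tendsto_zero (hx : PartiallyMonotonic x)
    (hpos : ∀ n, 0 < x n k) (hk : ¬Tendsto (fun n => x n k) atTop (𝓝 0)) :
    ∃ ε > 0, ∀ᶠ n in atTop, ε ≤ x n k := by
  by_contra! h
  have hanti : Antitone fun n => x n k := antitone_nat_of_succ_le (hx.1 k h)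
  refine hk (tendsto_order.2 ⟨fun a ha => .of_forall fun n => ha.trans (hpos n), fun ε hε => ?_⟩)
  obtain ⟨n, hn⟩ := (h ε hε).exists
  exact eventually_atTop.2 ⟨n, fun m hm => (hanti hm).trans_lt hn⟩

theorem PartiallyMonotonic.exists_eventually_le_of_not_tendsto_atTop (hx : PartiallyMonotonic x)
    (hk : ¬Tendsto (fun n => x n k) atTop atTop) : ∃ M, ∀ᶠ n in atTop, x n k ≤ M := by
  by_contra! h
  refine hk (tendsto_atTop_atTop_of_monotone (monotone_nat_of_le_succ (hx.2 k h)) fun b => ?_)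
  obtain ⟨n, hn⟩ := (h b).exists
  exact ⟨n, hn.le⟩

theorem PartiallyMonotonic.isBigO_log (hx : PartiallyMonotonic x) (hpos : ∀ n, 0 < x n k)
    (h₀ : ¬Tendsto (fun n => x n k) atTop (𝓝 0)) (h_top : ¬Tendsto (fun n => x n k) atTop atTop) :
    (fun n => Real.log (x n k)) =O[atTop] (fun _ => (1 : ℝ)) := by
  obtain ⟨ε, hε, hlow⟩ := hx.exists_eventually_le_of_not_tendsto_zero hpos h₀
  obtain ⟨M, hup⟩ := hx.exists_eventually_le_of_not_tendsto_atTop h_top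
  refine (isBigO_one_iff ℝ).2
    (isBoundedUnder_of_eventually_le (a := max |Real.log ε| |Real.log M|) ?_)
  filter_upwards [hlow, hup] with n hεn hnM
  exact abs_le_max_abs_abs (Real.log_le_log hε hεn) (Real.log_le_log (hpos n) hnM)

end

theorem exists_conservation_relation_general
    {N : ℕ} (C : Finset (Fin N → ℝ)) (x : ℕ → Fin N → ℝ)
    (hxpos : ∀ n i, 0 < x n i)
    (hmono : PartiallyMonotonic x)
    {P : ℕ} (T : Fin P → Finset (Fin N → ℝ)) (c : ℝ)
    (hpart : PartitionedAlong C x T c) :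
    ∃ w : Fin N → ℝ,
      ConservationRelation w
        {i | Tendsto (fun n => x n i) atTop (nhds 0)}
        {j | Tendsto (fun n => x n j) atTop atTop}
        T := by
  set U := {i | Tendsto (fun n => x n i) atTop (nhds 0)}
  set V := {j | Tendsto (fun n => x n j) atTop atTop}
  let v : ℕ → EuclideanSpace ℝ (Fin N) := fun n => WithLp.toLp 2 fun i => -Real.log (x n i)
  let S : Set (EuclideanSpace ℝ (Fin N)) :=
    {d | ∃ i, ∃ y ∈ T i, ∃ z ∈ T i, d = WithLp.toLp 2 (y - z)} ∪
      {d | ∃ k ∉ U, k ∉ V ∧ d = EuclideanSpace.single k 1}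
  have hS : ∀ d ∈ S, (fun n => inner ℝ d (v n)) =O[atTop] (fun _ => (1 : ℝ)) := by
    rintro d (⟨i, y, hy, z, hz, rfl⟩ | ⟨k, hkU, hkV, rfl⟩)
    · exact hpart.isBigO_inner_sub hxpos hy hz
    · simpa [v, EuclideanSpace.inner_single_left] using
        (hmono.isBigO_log (fun n => hxpos n k) hkU hkV).neg_left
  obtain ⟨w, hw, hpos, hneg⟩ := exists_mem_orthogonal_with_signs (Submodule.span ℝ S) U V
    (fun d hd => isBigO_inner_of_mem_span hS hd)
    (fun i hi => tendsto_neg_atBot_atTop.comp (Real.tendsto_log_nhdsGT_zero.comp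
      (tendsto_nhdsWithin_iff.2 ⟨hi, .of_forall fun n => hxpos n i⟩)))
    (fun j hj => tendsto_neg_atTop_atBot.comp (Real.tendsto_log_atTop.comp hj))
    (fun k hkU hkV => Submodule.subset_span (Or.inr ⟨k, hkU, hkV, rfl⟩))
  refine ⟨w, hpos, hneg, fun i y hy z hz => ?_⟩
  have hyz := (Submodule.mem_orthogonal _ _).1 hw _
    (Submodule.subset_span (Or.inl ⟨i, y, hy, z, hz, rfl⟩))
  simpa [EuclideanSpace.inner_eq_star_dotProduct, dotProduct] using hyz

/-- **Theorem (existence of a conservation relation).**  Let `𝒞` be a finite set of vectors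
in `ℝ^N` and let `(x_n)` be a partially monotonic sequence in `ℝ^N_{>0}` such that
`lim_n x_{n,i} ∈ {0, ∞}` for at least one `i`.  Let `U` (resp. `V`) be the set of indices
whose coordinates tend to `0` (resp. `∞`).  If `𝒞` is partitioned along `(x_n)` with tiers
`T_1, …, T_P` and constant `C > 1`, then there exists a conservation relation `w ∈ ℝ^N`
respecting the triple `(U, V, {T_i})`. -/
theorem exists_conservation_relation
    {N : ℕ} (C : Finset (Fin N → ℝ)) (x : ℕ → Fin N → ℝ)
    (hxpos : ∀ n i, 0 < x n i)
    (hmono : PartiallyMonotonic x)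
    (hlim : ∃ i, Tendsto (fun n => x n i) atTop (nhds 0) ∨
                 Tendsto (fun n => x n i) atTop atTop)
    {P : ℕ} (T : Fin P → Finset (Fin N → ℝ)) (c : ℝ)
    (hpart : PartitionedAlong C x T c) :
    ∃ w : Fin N → ℝ,
      ConservationRelation w
        {i | Tendsto (fun n => x n i) atTop (nhds 0)}
        {j | Tendsto (fun n => x n j) atTop atTop}
        T :=
  exists_conservation_relation_general C x hxpos hmono T c hpart
end

section
/- Let (𝒞, ℛ) be a weakly reversible chemical reaction network on N species whose reaction diagram consists of a single linkage class, equipped with bounded mass-action kinetics given by rate functions κ_k with η < κ_k(t) < 1/η for all t ≥ 0. Let D ⊆ ℝ^N_{>0} be a (nonempty) positive stoichiometric compatibility class. Then there exists M > 0 such that for every x ∈ D for which x_i > M or x_i < 1/M for at least one i ∈ {1,…,N}, one has Σ_k κ_k(t)·x^{y_k}·(y_k' − y_k)·ln(x) < 0 for all t ≥ 0, where ln(x) = (ln x_1, …, ln x_N). -/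
open Filter

/-- A chemical reaction network on `N` species: a finite set of complexes
(vectors in `ℤ^N_{≥0}`, modelled as real vectors with nonnegative-integer entries)
and a finite set of reactions (ordered pairs of distinct complexes), such that
every complex takes part in at least one reaction. -/
structure ReactionNetwork (N : ℕ) where
  complexes : Finset (Fin N → ℝ)
  reactions : Finset ((Fin N → ℝ) × (Fin N → ℝ))
  complexes_nonneg_int : ∀ y ∈ complexes, ∀ i, ∃ m : ℕ, y i = (m : ℝ)
  source_mem : ∀ r ∈ reactions, r.1 ∈ complexes
  target_mem : ∀ r ∈ reactions, r.2 ∈ complexes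
  ne_of_mem : ∀ r ∈ reactions, r.1 ≠ r.2
  complex_in_reaction : ∀ y ∈ complexes, ∃ r ∈ reactions, r.1 = y ∨ r.2 = y

/-- Two complexes are connected in the underlying undirected reaction diagram. -/
def ReactionNetwork.UndirConn {N : ℕ} (rn : ReactionNetwork N) :
    (Fin N → ℝ) → (Fin N → ℝ) → Prop :=
  Relation.ReflTransGen (fun a b => (a, b) ∈ rn.reactions ∨ (b, a) ∈ rn.reactions)

/-- There is a directed path (along reactions) from one complex to another. -/
def ReactionNetwork.DirReach {N : ℕ} (rn : ReactionNetwork N) :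
    (Fin N → ℝ) → (Fin N → ℝ) → Prop :=
  Relation.ReflTransGen (fun a b => (a, b) ∈ rn.reactions)

/-- The network is weakly reversible: each linkage class (connected component of the
underlying undirected reaction diagram) is strongly connected. -/
def ReactionNetwork.WeaklyReversible {N : ℕ} (rn : ReactionNetwork N) : Prop :=
  ∀ y ∈ rn.complexes, ∀ z ∈ rn.complexes, rn.UndirConn y z → rn.DirReach y z

/-- The reaction diagram consists of a single linkage class, i.e. it is connected. -/
def ReactionNetwork.SingleLinkageClass {N : ℕ} (rn : ReactionNetwork N) : Prop :=
  ∀ y ∈ rn.complexes, ∀ z ∈ rn.complexes, rn.UndirConn y z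

/-- `T ⊆ 𝒞` consists of a (nonempty) union of linkage classes. -/
def ReactionNetwork.IsUnionOfLinkageClasses {N : ℕ} (rn : ReactionNetwork N)
    (T : Finset (Fin N → ℝ)) : Prop :=
  T.Nonempty ∧ (∀ y ∈ T, y ∈ rn.complexes) ∧
  ∀ y ∈ T, ∀ z ∈ rn.complexes, rn.UndirConn y z → z ∈ T

/-- The stoichiometric subspace `S = span{y' − y : y → y' ∈ ℛ}`. -/
def ReactionNetwork.stoichSubspace {N : ℕ} (rn : ReactionNetwork N) :
    Submodule ℝ (Fin N → ℝ) :=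
  Submodule.span ℝ {v : Fin N → ℝ | ∃ r ∈ rn.reactions, v = r.2 - r.1}

/-- Bounded mass-action kinetics: each rate function `κ_k` satisfies
`η < κ_k(t) < 1/η` for all `t ≥ 0`. -/
def ReactionNetwork.BoundedKinetics {N : ℕ} (rn : ReactionNetwork N)
    (κ : ((Fin N → ℝ) × (Fin N → ℝ)) → ℝ → ℝ) (η : ℝ) : Prop :=
  0 < η ∧ ∀ r ∈ rn.reactions, ∀ t : ℝ, 0 ≤ t → η < κ r t ∧ κ r t < 1 / η

/-!
Write `u = log x` and `a_y = ⟨y, u⟩`, so that the drift is `∑ κ_r e^{a_y} (a_{y'} - a_y)`, and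
argue along an ultrafilter of points of `D` with `‖log x‖ → ∞`. If every `⟨y' - y, u⟩` stayed
bounded, the directions `u / ‖u‖` would converge to a unit vector `w ⊥ S`; then `⟨w, x⟩ = ⟨w, x₀⟩`
on `D`, while the coordinates with `w_i > 0` blow up and those with `w_i < 0` vanish, which is
impossible since `x₀ > 0`. So some complex falls unboundedly far below the top complex `y₀`, and
strong connectivity gives a reaction from a complex within bounded distance `K` of `a_{y₀}` to
one falling arbitrarily far. Its term, at most `-η e^{a_{y₀} - K}` times the fall, eventually
outweighs the other terms, each of which is at most `e^{a_{y₀}} / η` because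
`e^a (b - a) ≤ e^b`.
-/

open Topology

section Normalize

variable {α E : Type*} [NormedAddCommGroup E] [NormedSpace ℝ E] {l : Filter α} {u : α → E}
  {w : E}

theorem exists_tendsto_normalize [ProperSpace E] {U : Ultrafilter α}
    (hu : Tendsto (‖u ·‖) U atTop) :
    ∃ w, ‖w‖ = 1 ∧ Tendsto (fun x => ‖u x‖⁻¹ • u x) U (𝓝 w) := by
  have hsphere : ∀ᶠ x in U, ‖u x‖⁻¹ • u x ∈ Metric.sphere (0 : E) 1 := by
    filter_upwards [hu.eventually_gt_atTop 0] with x hx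
    rw [mem_sphere_zero_iff_norm, norm_smul, norm_inv, norm_norm, inv_mul_cancel₀ hx.ne']
  obtain ⟨w, hw, hlim⟩ := (isCompact_sphere (0 : E) 1).ultrafilter_le_nhds
    (U.map fun x => ‖u x‖⁻¹ • u x) (le_principal_iff.2 hsphere)
  exact ⟨w, mem_sphere_zero_iff_norm.1 hw, hlim⟩

theorem eventually_apply_eq_norm_mul_apply_normalize (hu : Tendsto (‖u ·‖) l atTop)
    (φ : E →L[ℝ] ℝ) : (fun x => φ (u x)) =ᶠ[l] fun x => ‖u x‖ * φ (‖u x‖⁻¹ • u x) := by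
  filter_upwards [hu.eventually_gt_atTop 0] with x hx
  rw [φ.map_smul, smul_eq_mul, mul_inv_cancel_left₀ hx.ne']

theorem tendsto_atTop_of_tendsto_normalize (hu : Tendsto (‖u ·‖) l atTop)
    (hw : Tendsto (fun x => ‖u x‖⁻¹ • u x) l (𝓝 w)) {φ : E →L[ℝ] ℝ} (hφ : 0 < φ w) :
    Tendsto (fun x => φ (u x)) l atTop :=
  (hu.atTop_mul_pos hφ ((φ.continuous.tendsto w).comp hw)).congr'
    (eventually_apply_eq_norm_mul_apply_normalize hu φ).symm

theorem tendsto_atBot_of_tendsto_normalize (hu : Tendsto (‖u ·‖) l atTop)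
    (hw : Tendsto (fun x => ‖u x‖⁻¹ • u x) l (𝓝 w)) {φ : E →L[ℝ] ℝ} (hφ : φ w < 0) :
    Tendsto (fun x => φ (u x)) l atBot :=
  (hu.atTop_mul_neg hφ ((φ.continuous.tendsto w).comp hw)).congr'
    (eventually_apply_eq_norm_mul_apply_normalize hu φ).symm

theorem eq_zero_of_tendsto_normalize [l.NeBot] (hu : Tendsto (‖u ·‖) l atTop)
    (hw : Tendsto (fun x => ‖u x‖⁻¹ • u x) l (𝓝 w)) {φ : E →L[ℝ] ℝ}
    (hφ : IsBoundedUnder (· ≤ ·) l (fun x => ‖φ (u x)‖)) : φ w = 0 := by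
  have hzero : Tendsto (fun x => ‖u x‖⁻¹ * φ (u x)) l (𝓝 0) :=
    (tendsto_inv_atTop_zero.comp hu).zero_mul_isBoundedUnder_le hφ
  refine tendsto_nhds_unique ((φ.continuous.tendsto w).comp hw) (hzero.congr fun x => ?_)
  simp only [Function.comp_apply, φ.map_smul, smul_eq_mul]

end Normalize

section PositiveOrthant

variable {N : ℕ}

theorem frequently_dotProduct_ne_of_tendsto {l : Filter (Fin N → ℝ)} [l.NeBot]
    {w x₀ : Fin N → ℝ} (hw : w ≠ 0) (hx₀ : ∀ i, 0 < x₀ i) (hpos : ∀ᶠ x in l, ∀ i, 0 < x i)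
    (htop : ∀ i, 0 < w i → Tendsto (fun x => x i) l atTop)
    (hzero : ∀ i, w i < 0 → Tendsto (fun x => x i) l (𝓝 0)) :
    ∃ᶠ x in l, w ⬝ᵥ x ≠ w ⬝ᵥ x₀ := by
  classical
  intro hconst
  simp only [not_not] at hconst
  have hrest : Tendsto (fun x => ∑ i with ¬ 0 < w i, w i * x i) l (𝓝 0) := by
    convert tendsto_finsetSum (f := fun i (x : Fin N → ℝ) => w i * x i) (a := fun _ => 0)
      _ fun i hi => ?_
    · simp
    rcases (not_lt.1 (Finset.mem_filter.1 hi).2).lt_or_eq with hneg | hwi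
    · simpa using (hzero i hneg).const_mul (w i)
    · simp [hwi]
  have hposPart : Tendsto (fun x => ∑ i with 0 < w i, w i * x i) l (𝓝 (w ⬝ᵥ x₀)) := by
    have hdiff := (tendsto_const_nhds (x := w ⬝ᵥ x₀)).sub hrest
    rw [sub_zero] at hdiff
    refine hdiff.congr' ?_
    filter_upwards [hconst] with x hx
    rw [← hx, sub_eq_iff_eq_add, eq_comm]
    exact Finset.sum_filter_add_sum_filter_not _ _ _
  by_cases hex : ∃ i, 0 < w i
  · obtain ⟨i, hi⟩ := hex
    refine not_tendsto_nhds_of_tendsto_atTop ?_ _ hposPart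
    refine tendsto_atTop_mono' l ?_ ((htop i hi).const_mul_atTop hi)
    filter_upwards [hpos] with x hx
    exact Finset.single_le_sum (f := fun i => w i * x i)
      (fun j hj => (mul_pos (Finset.mem_filter.1 hj).2 (hx j)).le)
      (Finset.mem_filter.2 ⟨Finset.mem_univ i, hi⟩)
  · push Not at hex
    have hzeroSum : w ⬝ᵥ x₀ = 0 := by
      refine tendsto_nhds_unique hposPart (tendsto_const_nhds.congr fun x => ?_)
      simp [Finset.filter_false_of_mem fun i _ => (hex i).not_gt]
    obtain ⟨i, hi⟩ := Function.ne_iff.1 hw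
    have hneg : w ⬝ᵥ x₀ < 0 := by
      refine Finset.sum_neg' (fun j _ => mul_nonpos_of_nonpos_of_nonneg (hex j) (hx₀ j).le)
        ⟨i, Finset.mem_univ i, mul_neg_of_neg_of_pos ((hex i).lt_of_ne hi) (hx₀ i)⟩
    exact hneg.ne hzeroSum

theorem dotProduct_eq_zero_of_mem_span {G : Set (Fin N → ℝ)} {w : Fin N → ℝ}
    (hG : ∀ g ∈ G, g ⬝ᵥ w = 0) {s : Fin N → ℝ} (hs : s ∈ Submodule.span ℝ G) :
    s ⬝ᵥ w = 0 :=
  (Submodule.span_le (p := LinearMap.ker ((dotProductBilin ℝ ℝ).flip w)).2 hG) hs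

theorem exists_not_isBoundedUnder_dotProduct_log {G : Set (Fin N → ℝ)} {x₀ : Fin N → ℝ}
    (hx₀ : ∀ i, 0 < x₀ i) {U : Ultrafilter (Fin N → ℝ)}
    (hU : ∀ᶠ x in U, (∀ i, 0 < x i) ∧ x - x₀ ∈ Submodule.span ℝ G)
    (hlog : Tendsto (fun x : Fin N → ℝ => ‖Real.log ∘ x‖) U atTop) :
    ∃ g ∈ G, ¬ IsBoundedUnder (· ≤ ·) U (fun x : Fin N → ℝ => ‖g ⬝ᵥ (Real.log ∘ x)‖) := by
  by_contra! hbdd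
  obtain ⟨w, hw1, hw⟩ := exists_tendsto_normalize hlog
  have hperp : ∀ g ∈ G, g ⬝ᵥ w = 0 := fun g hg =>
    eq_zero_of_tendsto_normalize hlog hw
      (φ := LinearMap.toContinuousLinearMap (dotProductBilin ℝ ℝ g)) (hbdd g hg)
  have hexp : ∀ᶠ x : Fin N → ℝ in U, ∀ i, Real.exp ((Real.log ∘ x) i) = x i := by
    filter_upwards [hU] with x hx i using Real.exp_log (hx.1 i)
  refine frequently_dotProduct_ne_of_tendsto (w := w) (norm_ne_zero_iff.1 (hw1 ▸ one_ne_zero))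
    hx₀ (hU.mono fun x hx => hx.1) (fun i hi => ?_) (fun i hi => ?_) ?_
  · refine (Real.tendsto_exp_atTop.comp ?_).congr' (hexp.mono fun x hx => hx i)
    exact tendsto_atTop_of_tendsto_normalize hlog hw (φ := ContinuousLinearMap.proj i) hi
  · refine (Real.tendsto_exp_atBot.comp ?_).congr' (hexp.mono fun x hx => hx i)
    exact tendsto_atBot_of_tendsto_normalize hlog hw (φ := ContinuousLinearMap.proj i) hi
  · filter_upwards [hU] with x hx
    rw [not_not, ← sub_eq_zero, ← dotProduct_sub, dotProduct_comm]
    exact dotProduct_eq_zero_of_mem_span hperp hx.2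

end PositiveOrthant

theorem Relation.ReflTransGen.exists_rel_of_not {α : Type*} {r : α → α → Prop} {p : α → Prop}
    {a b : α} (h : Relation.ReflTransGen r a b) (ha : p a) (hb : ¬ p b) :
    ∃ c d, r c d ∧ p c ∧ ¬ p d := by
  induction h with
  | refl => exact absurd ha hb
  | @tail c d _ hcd ih => exact (em (p c)).elim (fun hc => ⟨c, d, hcd, hc, hb⟩) ih

namespace Ultrafilter

variable {α β γ : Type*} [LinearOrder γ] (U : Ultrafilter α)

theorem exists_eventually_forall_le {s : Finset β} (hs : s.Nonempty) (f : β → α → γ) :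
    ∃ b ∈ s, ∀ᶠ x in U, ∀ c ∈ s, f c x ≤ f b x := by
  have hcover : (⋃ b ∈ (s : Set β), {x | ∀ c ∈ s, f c x ≤ f b x}) ∈ U :=
    Filter.univ_mem' fun x => by
      obtain ⟨b, hb, hmax⟩ := s.exists_max_image (f · x) hs
      exact Set.mem_biUnion hb hmax
  exact (Ultrafilter.finite_biUnion_mem_iff s.finite_toSet).1 hcover

theorem tendsto_atTop_of_not_isBoundedUnder {f : α → ℝ}
    (hf : ¬ IsBoundedUnder (· ≤ ·) U f) : Tendsto f U atTop :=
  tendsto_atTop.2 fun b => (U.eventually_not.2 fun h => hf ⟨b, h⟩).mono fun _ hx => le_of_not_ge hx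

end Ultrafilter

theorem Real.exp_mul_sub_le_exp (a b : ℝ) : Real.exp a * (b - a) ≤ Real.exp b :=
  calc Real.exp a * (b - a) ≤ Real.exp a * Real.exp (b - a) := by
        gcongr; linarith [Real.add_one_le_exp (b - a)]
    _ = Real.exp b := by rw [← Real.exp_add, add_sub_cancel]

section Drift

variable {α β : Type*} {R : Finset (β × β)} {η : ℝ}

theorem sum_mul_exp_mul_sub_neg (a : β → ℝ) (k : β × β → ℝ) (hη : 0 < η)
    (hk : ∀ r ∈ R, η < k r ∧ k r < 1 / η) {A K : ℝ} (hA : ∀ r ∈ R, a r.2 ≤ A) {r₀ : β × β}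
    (hr₀ : r₀ ∈ R) (hsrc : A - K ≤ a r₀.1)
    (hdrop : a r₀.2 - a r₀.1 < -(R.card * Real.exp K / η ^ 2)) :
    ∑ r ∈ R, k r * Real.exp (a r.1) * (a r.2 - a r.1) < 0 := by
  classical
  have hterm : ∀ r ∈ R, k r * Real.exp (a r.1) * (a r.2 - a r.1) ≤ Real.exp A / η := by
    intro r hr
    have hk0 : 0 ≤ k r := hη.le.trans (hk r hr).1.le
    calc k r * Real.exp (a r.1) * (a r.2 - a r.1)
        = k r * (Real.exp (a r.1) * (a r.2 - a r.1)) := mul_assoc _ _ _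
      _ ≤ k r * Real.exp A := mul_le_mul_of_nonneg_left
          ((Real.exp_mul_sub_le_exp _ _).trans (Real.exp_le_exp.2 (hA r hr))) hk0
      _ ≤ 1 / η * Real.exp A := mul_le_mul_of_nonneg_right (hk r hr).2.le (Real.exp_pos A).le
      _ = Real.exp A / η := one_div_mul_eq_div _ _
  have hrest : ∑ r ∈ R.erase r₀, k r * Real.exp (a r.1) * (a r.2 - a r.1) ≤
      R.card * (Real.exp A / η) :=
    calc _ ≤ (R.erase r₀).card * (Real.exp A / η) := by
          simpa using Finset.sum_le_card_nsmul _ _ _ fun r hr => hterm r (R.mem_of_mem_erase hr)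
      _ ≤ R.card * (Real.exp A / η) := by
          gcongr
          exact R.erase_subset r₀
  have hmain : k r₀ * Real.exp (a r₀.1) * (a r₀.2 - a r₀.1) < -(R.card * (Real.exp A / η)) :=
    calc k r₀ * Real.exp (a r₀.1) * (a r₀.2 - a r₀.1)
        ≤ η * Real.exp (A - K) * (a r₀.2 - a r₀.1) := by
          refine mul_le_mul_of_nonpos_right ?_ (hdrop.le.trans (neg_nonpos.2 (by positivity)))
          exact mul_le_mul (hk r₀ hr₀).1.le (Real.exp_le_exp.2 hsrc) (Real.exp_pos _).le
            (hη.trans (hk r₀ hr₀).1).le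
      _ < η * Real.exp (A - K) * -(R.card * Real.exp K / η ^ 2) := by
          gcongr
      _ = -(R.card * (Real.exp A / η)) := by
          rw [Real.exp_sub]
          field_simp
  rw [← Finset.sum_erase_add R _ hr₀]
  linarith

theorem eventually_sum_mul_exp_mul_sub_neg {l : Filter α} (a : β → α → ℝ) (A : α → ℝ)
    (hA : ∀ᶠ x in l, ∀ r ∈ R, a r.2 x ≤ A x) {r₀ : β × β} (hr₀ : r₀ ∈ R)
    (hsrc : IsBoundedUnder (· ≤ ·) l (fun x => A x - a r₀.1 x))
    (htgt : Tendsto (fun x => A x - a r₀.2 x) l atTop) (hη : 0 < η) (κ : β × β → ℝ → ℝ)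
    (hκ : ∀ r ∈ R, ∀ t, 0 ≤ t → η < κ r t ∧ κ r t < 1 / η) :
    ∀ᶠ x in l, ∀ t, 0 ≤ t →
      ∑ r ∈ R, κ r t * Real.exp (a r.1 x) * (a r.2 x - a r.1 x) < 0 := by
  obtain ⟨K, hK⟩ := hsrc
  filter_upwards [hA, hK, htgt.eventually_gt_atTop (K + R.card * Real.exp K / η ^ 2)]
    with x hAx hKx hx t ht
  have hKx : A x - a r₀.1 x ≤ K := hKx
  exact sum_mul_exp_mul_sub_neg (a · x) (κ · t) hη (fun r hr => hκ r hr t ht) hAx hr₀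
    (K := K) (by linarith) (by linarith)

end Drift

theorem ReactionNetwork.exists_reaction_isBoundedUnder_tendsto {N : ℕ} {α : Type*}
    (rn : ReactionNetwork N)
    (hconn : ∀ y ∈ rn.complexes, ∀ z ∈ rn.complexes, rn.DirReach y z) {U : Ultrafilter α}
    (a : (Fin N → ℝ) → α → ℝ) {y₀ : Fin N → ℝ} (hy₀ : y₀ ∈ rn.complexes)
    (hmax : ∀ᶠ x in U, ∀ y ∈ rn.complexes, a y x ≤ a y₀ x) {r₁ : (Fin N → ℝ) × (Fin N → ℝ)}
    (hr₁ : r₁ ∈ rn.reactions) (hr₁U : ¬ IsBoundedUnder (· ≤ ·) U (fun x => ‖a r₁.2 x - a r₁.1 x‖)) :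
    ∃ r ∈ rn.reactions, IsBoundedUnder (· ≤ ·) U (fun x => a y₀ x - a r.1 x) ∧
      Tendsto (fun x => a y₀ x - a r.2 x) U atTop := by
  set Near : (Fin N → ℝ) → Prop := fun y => IsBoundedUnder (· ≤ ·) U (fun x => a y₀ x - a y x)
  have hfar : ∃ z ∈ rn.complexes, ¬ Near z := by
    by_contra! hnear
    obtain ⟨K₁, hK₁⟩ := hnear r₁.1 (rn.source_mem r₁ hr₁)
    obtain ⟨K₂, hK₂⟩ := hnear r₁.2 (rn.target_mem r₁ hr₁)
    refine hr₁U ⟨K₁ + K₂, eventually_map.2 ?_⟩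
    filter_upwards [eventually_map.1 hK₁, eventually_map.1 hK₂, hmax] with x h₁ h₂ hx
    have := hx _ (rn.source_mem r₁ hr₁)
    have := hx _ (rn.target_mem r₁ hr₁)
    rw [Real.norm_eq_abs, abs_le]
    constructor <;> linarith
  obtain ⟨z, hz, hzfar⟩ := hfar
  obtain ⟨c, d, hcd, hc, hd⟩ := (hconn y₀ hy₀ z hz).exists_rel_of_not
    (p := Near) ⟨0, by simp⟩ hzfar
  exact ⟨(c, d), hcd, hc, U.tendsto_atTop_of_not_isBoundedUnder hd⟩

theorem vpow_eq_exp_dotProduct_log {N : ℕ} {x : Fin N → ℝ} (hx : ∀ i, 0 < x i)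
    (y : Fin N → ℝ) : vpow x y = Real.exp (y ⬝ᵥ (Real.log ∘ x)) := by
  rw [vpow, dotProduct, Real.exp_sum]
  exact Finset.prod_congr rfl fun i _ => by
    rw [Real.rpow_def_of_pos (hx i), mul_comm, Function.comp_apply]

theorem exists_escape_bound_of_eventually {N : ℕ} {D : Set (Fin N → ℝ)}
    (hD : ∀ x ∈ D, ∀ i, 0 < x i) {P : (Fin N → ℝ) → Prop}
    (h : ∀ᶠ x in comap (fun x => ‖Real.log ∘ x‖) atTop ⊓ 𝓟 D, P x) :
    ∃ M, 0 < M ∧ ∀ x ∈ D, (∃ i, M < x i ∨ x i < 1 / M) → P x := by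
  obtain ⟨L, hL⟩ := eventually_atTop.1 (eventually_comap.1 (eventually_inf_principal.1 h))
  refine ⟨Real.exp L, Real.exp_pos L, fun x hx ⟨i, hi⟩ => hL _ ?_ x rfl hx⟩
  have hlog : L ≤ |Real.log (x i)| := by
    rcases hi with hi | hi
    · exact (Real.lt_log_iff_exp_lt (hD x hx i)).2 hi |>.le.trans (le_abs_self _)
    · rw [one_div, ← Real.exp_neg, ← Real.log_lt_iff_lt_exp (hD x hx i)] at hi
      exact (le_neg.1 hi.le).trans (neg_le_abs _)
  exact hlog.trans (norm_le_pi_norm (Real.log ∘ x) i)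

/-- **Lemma (negative drift on a positive stoichiometric compatibility class).**
Let `(𝒞, ℛ)` be a weakly reversible, single linkage class reaction network on `N` species
with bounded mass-action kinetics (`η < κ_k(t) < 1/η` for `t ≥ 0`), and let `D` be a
(nonempty) positive stoichiometric compatibility class, i.e.
`D = (x_0 + S) ∩ ℝ^N_{>0}` for some `x_0 ∈ ℝ^N_{>0}`.  Then there is `M > 0` such that
for every `x ∈ D` with `x_i > M` or `x_i < 1/M` for at least one `i`, one has
`Σ_k κ_k(t) x^{y_k} (y_k' − y_k) · ln(x) < 0` for all `t ≥ 0`. -/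
theorem negative_drift_on_compatibility_class
    {N : ℕ} (rn : ReactionNetwork N)
    (hwr : rn.WeaklyReversible) (hsingle : rn.SingleLinkageClass)
    (η : ℝ) (κ : ((Fin N → ℝ) × (Fin N → ℝ)) → ℝ → ℝ)
    (hκ : rn.BoundedKinetics κ η)
    (x₀ : Fin N → ℝ) (hx₀ : ∀ i, 0 < x₀ i)
    (D : Set (Fin N → ℝ))
    (hD : D = {x : Fin N → ℝ | (∀ i, 0 < x i) ∧ x - x₀ ∈ rn.stoichSubspace}) :
    ∃ M : ℝ, 0 < M ∧ ∀ x ∈ D, (∃ i, M < x i ∨ x i < 1 / M) → ∀ t : ℝ, 0 ≤ t →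
      ∑ r ∈ rn.reactions,
        κ r t * vpow x r.1 * (∑ j, (r.2 j - r.1 j) * Real.log (x j)) < 0 := by
  obtain ⟨hη, hκ⟩ := hκ
  subst hD
  refine exists_escape_bound_of_eventually (fun x hx => hx.1)
    (mem_iff_ultrafilter.2 fun U hU => ?_)
  have hUD : ∀ᶠ x in U, (∀ i, 0 < x i) ∧ x - x₀ ∈ rn.stoichSubspace :=
    le_principal_iff.1 (hU.trans inf_le_right)
  have hlog : Tendsto (fun x : Fin N → ℝ => ‖Real.log ∘ x‖) U atTop :=
    tendsto_iff_comap.2 (hU.trans inf_le_left)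
  obtain ⟨_, ⟨r₁, hr₁, rfl⟩, hr₁U⟩ := exists_not_isBoundedUnder_dotProduct_log hx₀ hUD hlog
  set a : (Fin N → ℝ) → (Fin N → ℝ) → ℝ := fun y x => y ⬝ᵥ (Real.log ∘ x)
  obtain ⟨y₀, hy₀, hmax⟩ := U.exists_eventually_forall_le ⟨r₁.1, rn.source_mem r₁ hr₁⟩ a
  obtain ⟨r, hr, hsrc, htgt⟩ := rn.exists_reaction_isBoundedUnder_tendsto
    (fun y hy z hz => hwr y hy z hz (hsingle y hy z hz)) a hy₀ hmax hr₁
    (by simpa only [a, sub_dotProduct] using hr₁U)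
  filter_upwards [hUD, eventually_sum_mul_exp_mul_sub_neg a (a y₀)
    (hmax.mono fun x hx r hr => hx r.2 (rn.target_mem r hr)) hr hsrc htgt hη κ hκ]
    with x hx hneg t ht
  refine (Finset.sum_congr rfl fun r _ => ?_).trans_lt (hneg t ht)
  rw [vpow_eq_exp_dotProduct_log hx.1]
  exact congrArg _ (sub_dotProduct r.2 r.1 _)
end

section
/- Let (𝒞, ℛ) be a weakly reversible chemical reaction network on N species whose reaction diagram consists of a single linkage class, equipped with bounded mass-action kinetics given by rate functions κ_k with η < κ_k(t) < 1/η for all t ≥ 0. Let P be a positive stoichiometric compatibility class, and for each x_0 ∈ P let φ(·, x_0) : [0,∞) → ℝ^N_{>0} be a differentiable trajectory of the system with φ(0, x_0) = x_0, i.e., ∂_t φ(t, x_0) = Σ_k κ_k(t)·φ(t,x_0)^{y_k}·(y_k' − y_k) for all t ≥ 0. Suppose there exists δ > 0 such that liminf_{t→∞} φ_i(t, x_0) > δ for all i ∈ {1,…,N} and all x_0 ∈ P. Then there exists ρ > 0 such that for every x_0 ∈ P and every i ∈ {1,…,N}: ρ < liminf_{t→∞} φ_i(t, x_0) ≤ limsup_{t→∞}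 φ_i(t, x_0) < 1/ρ. That is, the system is permanent on P. -/
open Filter

/-!
Along a trajectory the free energy `V(x) = ∑ᵢ (xᵢ log xᵢ - xᵢ)` changes at the rate
`∑_{y → y'} κ x^y ⟨y' - y, log x⟩`. Put `θ(y) = ⟨y, log x⟩`, so that `x^y = exp θ(y)`, and let `y₀`
maximise `θ` over the complexes. If `x ≥ δ` lies far out in its compatibility class `a + S`, some
reaction has a huge `|θ(y') - θ(y)|`: otherwise `log x` is bounded modulo `Sᗮ`, and since
`x - a ∈ S` this bounds `x`. By pigeonhole over the complexes there is then a top tier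
`{y | θ(y₀) - θ(y) ≤ c}` separated from all other complexes by a gap much larger than `exp c`,
and weak reversibility of the single linkage class yields a reaction leaving the tier. Its
contribution, at most `-η exp (θ(y₀) - c) · gap`, beats all the positive ones, each at most
`exp θ(y₀) / η`, so `V` drops at unit rate while `x` is far out. Once the trajectory stays above
`δ` it therefore enters a sublevel set of `V`, bounded uniformly on the class, and never leaves it.
-/

open Filter Real Set

theorem Relation.ReflTransGen.exists_rel_not {α : Type*} {r : α → α → Prop} {p : α → Prop}
    {a b : α} (h : Relation.ReflTransGen r a b) (ha : p a) (hb : ¬p b) :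
    ∃ x y, r x y ∧ p x ∧ ¬p y := by
  induction h with
  | refl => exact absurd ha hb
  | @tail c d _ hcd ih =>
    by_cases hc : p c
    · exact ⟨c, d, hcd, hc, hb⟩
    · exact ih hc

theorem Finset.exists_lt_card_forall_le_or_lt {α : Type*} (s : Finset α) (g : α → ℝ)
    {L : ℕ → ℝ} (hL : Monotone L) {y₀ : α} (hy₀ : y₀ ∈ s) (h₀ : g y₀ ≤ L 0) :
    ∃ n < s.card, ∀ y ∈ s, g y ≤ L n ∨ L (n + 1) < g y := by
  classical
  -- otherwise the `s.card` disjoint intervals `(L n, L (n + 1)]` all meet `g '' (s.erase y₀)`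
  have : Nonempty α := ⟨y₀⟩
  by_contra! h
  choose! f hfs hf using h
  have hmaps : ∀ n ∈ Finset.range s.card, f n ∈ s.erase y₀ := fun n hn => by
    have hn := Finset.mem_range.1 hn
    refine Finset.mem_erase.2 ⟨fun hfn => ?_, hfs n hn⟩
    have := (hf n hn).1
    rw [hfn] at this
    linarith [hL (Nat.zero_le n)]
  have hinj : Set.InjOn f (Finset.range s.card : Set ℕ) := by
    have key : ∀ m n, m < s.card → n < s.card → m < n → f m ≠ f n := fun m n hm hn hmn hf' => by
      have h1 := (hf m hm).2
      have h2 := (hf n hn).1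
      rw [hf'] at h1
      linarith [hL (Nat.succ_le_of_lt hmn)]
    intro m hm n hn hmn
    have hm := Finset.mem_range.1 hm
    have hn := Finset.mem_range.1 hn
    rcases lt_trichotomy m n with hlt | heq | hgt
    · exact absurd hmn (key m n hm hn hlt)
    · exact heq
    · exact absurd hmn.symm (key n m hn hm hgt)
  have := Finset.card_le_card_of_injOn f hmaps hinj
  rw [Finset.card_range, Finset.card_erase_of_mem hy₀] at this
  have := Finset.card_pos.2 ⟨y₀, hy₀⟩
  omega

theorem LinearMap.exists_preimage_norm_le {E F : Type*} [NormedAddCommGroup E] [NormedSpace ℝ E]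
    [FiniteDimensional ℝ E] [NormedAddCommGroup F] [NormedSpace ℝ F] (f : E →ₗ[ℝ] F) :
    ∃ C > 0, ∀ u, ∃ p, f p = f u ∧ ‖p‖ ≤ C * ‖f u‖ := by
  let g : E →L[ℝ] LinearMap.range f := LinearMap.toContinuousLinearMap f.rangeRestrict
  obtain ⟨C, hC, hg⟩ := g.exists_preimage_norm_le f.surjective_rangeRestrict
  refine ⟨C, hC, fun u => ?_⟩
  obtain ⟨p, hp, hpn⟩ := hg (g u)
  exact ⟨p, congrArg Subtype.val hp, hpn⟩

theorem Submodule.sub_mem_of_hasDerivWithinAt {E : Type*} [NormedAddCommGroup E]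
    [NormedSpace ℝ E] [FiniteDimensional ℝ E] (S : Submodule ℝ E) {f f' : ℝ → E}
    (hf : ∀ t, 0 ≤ t → HasDerivWithinAt f (f' t) (Ici 0) t) (hf' : ∀ t, 0 ≤ t → f' t ∈ S)
    {t : ℝ} (ht : 0 ≤ t) : f t - f 0 ∈ S := by
  by_contra hnot
  obtain ⟨l, hl, hSl⟩ := Submodule.exists_le_ker_of_notMem hnot
  let lc : E →L[ℝ] ℝ := ⟨l, LinearMap.continuous_of_finiteDimensional l⟩
  have hconst := constant_of_has_deriv_right_zero (f := fun s => lc (f s)) (a := 0) (b := t)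
    (fun s hs => (lc.continuous.continuousAt.comp_continuousWithinAt
      (hf s hs.1).continuousWithinAt).mono Icc_subset_Ici_self)
    (fun s hs => by
      have hl0 : l (f' s) = 0 := LinearMap.mem_ker.1 (hSl (hf' s hs.1))
      simpa [lc, Function.comp_def, hl0] using
        (lc.hasFDerivAt.comp_hasDerivWithinAt s (hf s hs.1)).mono (Ici_subset_Ici.2 hs.1))
    t ⟨ht, le_rfl⟩
  exact hl (by simpa [lc, sub_eq_zero] using hconst)

theorem exists_le_of_hasDerivWithinAt_le_neg_one {V D : ℝ → ℝ} {T₀ A c : ℝ}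
    (hV : ∀ t, T₀ ≤ t → HasDerivWithinAt V (D t) (Ici T₀) t) (hA : ∀ t, T₀ ≤ t → A ≤ V t)
    (hD : ∀ t, T₀ ≤ t → c ≤ V t → D t ≤ -1) : ∃ t, T₀ ≤ t ∧ V t ≤ c := by
  by_contra! h
  set T := T₀ + (V T₀ - A + 1)
  have hT : T₀ ≤ T := by linarith [hA T₀ le_rfl]
  have hdecay := image_le_of_deriv_right_le_deriv_boundary (a := T₀) (b := T)
    (B := fun s => V T₀ - (s - T₀)) (B' := fun _ => -1)
    (fun s hs => (hV s hs.1).continuousWithinAt.mono Icc_subset_Ici_self)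
    (fun s hs => (hV s hs.1).mono (Ici_subset_Ici.2 hs.1)) (by simp) (by fun_prop)
    (fun s _ => by simpa using ((hasDerivWithinAt_id s _).sub_const T₀).const_sub (V T₀))
    (fun s hs => hD s hs.1 (h s hs.1).le) ⟨hT, le_rfl⟩
  linarith [hA T hT]

theorem le_of_hasDerivWithinAt_neg {V D : ℝ → ℝ} {T₀ c : ℝ}
    (hV : ∀ t, T₀ ≤ t → HasDerivWithinAt V (D t) (Ici T₀) t)
    (hD : ∀ t, T₀ ≤ t → V t = c → D t < 0) (hT₀ : V T₀ ≤ c) {t : ℝ} (ht : T₀ ≤ t) :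
    V t ≤ c :=
  image_le_of_deriv_right_lt_deriv_boundary (a := T₀) (b := t) (B := fun _ => c) (B' := fun _ => 0)
    (fun s hs => (hV s hs.1).continuousWithinAt.mono Icc_subset_Ici_self)
    (fun s hs => (hV s hs.1).mono (Ici_subset_Ici.2 hs.1)) hT₀ (fun _ => hasDerivAt_const _ _)
    (fun s hs => hD s hs.1) ⟨ht, le_rfl⟩

theorem eventually_le_of_hasDerivWithinAt_le_neg_one {V D : ℝ → ℝ} {T₀ A c : ℝ}
    (hV : ∀ t, T₀ ≤ t → HasDerivWithinAt V (D t) (Ici T₀) t) (hA : ∀ t, T₀ ≤ t → A ≤ V t)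
    (hD : ∀ t, T₀ ≤ t → c ≤ V t → D t ≤ -1) : ∀ᶠ t in atTop, V t ≤ c := by
  obtain ⟨t₁, ht₁, hVt₁⟩ := exists_le_of_hasDerivWithinAt_le_neg_one hV hA hD
  refine eventually_atTop.2 ⟨t₁, fun t ht => le_of_hasDerivWithinAt_neg
    (fun s hs => (hV s (ht₁.trans hs)).mono (Ici_subset_Ici.2 ht₁))
    (fun s hs hVs => ?_) hVt₁ ht⟩
  linarith [hD s (ht₁.trans hs) hVs.ge]

theorem mul_exp_mul_sub_le {k a b Θ η : ℝ} (hk₀ : 0 ≤ k) (hk : k ≤ 1 / η) (hb : b ≤ Θ) :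
    k * exp a * (b - a) ≤ exp Θ / η := by
  have hη : 0 ≤ 1 / η := hk₀.trans hk
  rcases le_total b a with hba | hab
  · calc k * exp a * (b - a) ≤ 0 :=
          mul_nonpos_of_nonneg_of_nonpos (by positivity) (by linarith)
      _ ≤ exp Θ / η := by rw [div_eq_mul_one_div]; positivity
  · have hgrowth : exp a * (b - a) ≤ exp Θ := by
      have h := mul_le_mul_of_nonneg_left (add_one_le_exp (b - a)) (exp_pos a).le
      rw [← exp_add, add_sub_cancel] at h
      nlinarith [exp_le_exp.2 hb, exp_pos a]
    calc k * exp a * (b - a) = k * (exp a * (b - a)) := by ring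
      _ ≤ 1 / η * exp Θ := mul_le_mul hk hgrowth (by nlinarith [exp_pos a]) hη
      _ = exp Θ / η := by ring

theorem sum_mul_exp_mul_sub_le_neg_exp {ι : Type*} (s : Finset ι) {k θ θ' : ι → ℝ}
    {η c Θ : ℝ} (hη : 0 < η) (hk : ∀ r ∈ s, η ≤ k r ∧ k r ≤ 1 / η) (hΘ : ∀ r ∈ s, θ' r ≤ Θ)
    {r₀ : ι} (hr₀ : r₀ ∈ s) (hsrc : Θ - θ r₀ ≤ c)
    (htgt : c + exp c * (s.card / η + 1) / η ≤ Θ - θ' r₀) :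
    ∑ r ∈ s, k r * exp (θ r) * (θ' r - θ r) ≤ -exp Θ := by
  classical
  have hrate : η * exp (Θ - c) ≤ k r₀ * exp (θ r₀) :=
    mul_le_mul (hk r₀ hr₀).1 (exp_le_exp.2 (by linarith)) (exp_pos _).le
      (hη.le.trans (hk r₀ hr₀).1)
  have hG : 0 ≤ exp c * (s.card / η + 1) / η := by positivity
  have hexit : k r₀ * exp (θ r₀) * (θ' r₀ - θ r₀) ≤ -(exp Θ * (s.card / η + 1)) :=
    calc k r₀ * exp (θ r₀) * (θ' r₀ - θ r₀) ≤ η * exp (Θ - c) * (θ' r₀ - θ r₀) :=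
          mul_le_mul_of_nonpos_right hrate (by linarith)
      _ ≤ η * exp (Θ - c) * -(exp c * (s.card / η + 1) / η) :=
          mul_le_mul_of_nonneg_left (by linarith) (by positivity)
      _ = -(exp Θ * (s.card / η + 1)) := by rw [exp_sub]; field_simp
  have hrest := Finset.sum_le_card_nsmul (s.erase r₀)
    (fun r => k r * exp (θ r) * (θ' r - θ r)) (exp Θ / η) fun r hr =>
    mul_exp_mul_sub_le (hη.le.trans (hk r (Finset.mem_of_mem_erase hr)).1)
      (hk r (Finset.mem_of_mem_erase hr)).2 (hΘ r (Finset.mem_of_mem_erase hr))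
  have hcard : ((s.erase r₀).card : ℝ) ≤ s.card := by
    exact_mod_cast Finset.card_le_card (Finset.erase_subset r₀ s)
  rw [nsmul_eq_mul] at hrest
  rw [← Finset.sum_erase_add _ _ hr₀]
  have : ((s.erase r₀).card : ℝ) * (exp Θ / η) ≤ s.card * (exp Θ / η) :=
    mul_le_mul_of_nonneg_right hcard (by positivity)
  have : (s.card : ℝ) * (exp Θ / η) - exp Θ * (s.card / η + 1) = -exp Θ := by ring
  linarith

section

variable {N : ℕ}

noncomputable def freeEnergy (x : Fin N → ℝ) : ℝ := ∑ i, (x i * log (x i) - x i)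

theorem sub_exp_one_le_mul_log_sub {u : ℝ} (hu : 0 < u) : u - exp 1 ≤ u * log u - u := by
  have h := one_sub_inv_le_log_of_pos (div_pos hu (exp_pos 1))
  rw [log_div hu.ne' (exp_pos 1).ne', log_exp, inv_div] at h
  have h' := mul_le_mul_of_nonneg_left h hu.le
  rw [mul_sub, mul_one, mul_div_cancel₀ _ hu.ne'] at h'
  linarith

theorem sum_sub_exp_one_le_freeEnergy {x : Fin N → ℝ} (hx : ∀ i, 0 < x i) :
    ∑ i, (x i - exp 1) ≤ freeEnergy x :=
  Finset.sum_le_sum fun i _ => sub_exp_one_le_mul_log_sub (hx i)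

theorem neg_le_freeEnergy {x : Fin N → ℝ} (hx : ∀ i, 0 < x i) : -(N * exp 1) ≤ freeEnergy x := by
  have := sum_sub_exp_one_le_freeEnergy hx
  simp only [Finset.sum_sub_distrib, Finset.sum_const, Finset.card_univ, Fintype.card_fin,
    nsmul_eq_mul] at this
  linarith [Finset.sum_nonneg fun i (_ : i ∈ Finset.univ) => (hx i).le]

theorem le_freeEnergy_add {x : Fin N → ℝ} (hx : ∀ i, 0 < x i) (j : Fin N) :
    x j ≤ freeEnergy x + N * exp 1 := by
  have hsum : x j ≤ ∑ i, x i :=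
    Finset.single_le_sum (fun i _ => (hx i).le) (Finset.mem_univ j)
  have := sum_sub_exp_one_le_freeEnergy hx
  simp only [Finset.sum_sub_distrib, Finset.sum_const, Finset.card_univ, Fintype.card_fin,
    nsmul_eq_mul] at this
  linarith

theorem freeEnergy_le {x : Fin N → ℝ} (hx : ∀ i, 0 < x i) {R : ℝ} (hR : ∀ i, x i ≤ R) :
    freeEnergy x ≤ N * R ^ 2 := by
  have hterm : ∀ i, x i * log (x i) - x i ≤ R ^ 2 := fun i => by
    have hlog := log_le_sub_one_of_pos (hx i)
    nlinarith [hx i, hR i, mul_le_mul_of_nonneg_left hlog (hx i).le]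
  calc freeEnergy x ≤ ∑ _i : Fin N, R ^ 2 := Finset.sum_le_sum fun i _ => hterm i
    _ = N * R ^ 2 := by simp

theorem hasDerivWithinAt_freeEnergy_comp {φ : ℝ → Fin N → ℝ} {v : Fin N → ℝ} {s : Set ℝ} {t : ℝ}
    (hφ : HasDerivWithinAt φ v s t) (hpos : ∀ i, 0 < φ t i) :
    HasDerivWithinAt (fun τ => freeEnergy (φ τ)) (v ⬝ᵥ (log ∘ φ t)) s t := by
  have hterm : ∀ i, HasDerivWithinAt (fun τ => φ τ i * log (φ τ i) - φ τ i)
      (v i * log (φ t i)) s t := fun i => by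
    have hφi := hasDerivWithinAt_pi.1 hφ i
    refine ((hφi.mul (hφi.log (hpos i).ne')).sub hφi).congr_deriv ?_
    rw [mul_div_cancel₀ _ (hpos i).ne']
    ring
  simpa only [freeEnergy, dotProduct, Function.comp_apply] using
    HasDerivWithinAt.fun_sum (u := Finset.univ) fun i _ => hterm i

theorem vpow_eq_exp_dotProduct {x : Fin N → ℝ} (hx : ∀ i, 0 < x i) (y : Fin N → ℝ) :
    vpow x y = exp (y ⬝ᵥ (log ∘ x)) := by
  rw [vpow, dotProduct, exp_sum]
  exact Finset.prod_congr rfl fun i _ => by rw [rpow_def_of_pos (hx i), mul_comm]; rfl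

theorem le_of_sum_sub_mul_log_sub_le {x a : Fin N → ℝ} (hx : ∀ i, 0 < x i) (ha : ∀ i, 0 < a i)
    {K : ℝ} (hK : 0 ≤ K)
    (h : ∑ i, (x i - a i) * (log (x i) - log (a i)) ≤ K * ∑ i, |x i - a i|) (j : Fin N) :
    x j ≤ ‖a‖ * (2 + exp (N * K)) := by
  have : Nonempty (Fin N) := ⟨j⟩
  obtain ⟨m, hm⟩ := Finite.exists_max fun i => |x i - a i|
  have hterm : ∀ i, 0 ≤ (x i - a i) * (log (x i) - log (a i)) := fun i => by
    rcases le_total (x i) (a i) with hle | hle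
    · exact mul_nonneg_of_nonpos_of_nonpos (by linarith) (by linarith [log_le_log (hx i) hle])
    · exact mul_nonneg (by linarith) (by linarith [log_le_log (ha i) hle])
  have hsum : ∑ i, |x i - a i| ≤ N * |x m - a m| := by
    simpa using Finset.sum_le_card_nsmul Finset.univ _ _ fun i _ => hm i
  have hmterm : (x m - a m) * (log (x m) - log (a m)) ≤ N * K * |x m - a m| :=
    calc _ ≤ ∑ i, (x i - a i) * (log (x i) - log (a i)) :=
          Finset.single_le_sum (fun i _ => hterm i) (Finset.mem_univ m)
      _ ≤ K * (N * |x m - a m|) := h.trans (mul_le_mul_of_nonneg_left hsum hK)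
      _ = N * K * |x m - a m| := by ring
  have hnorm : ∀ i, a i ≤ ‖a‖ := fun i => (le_abs_self _).trans (norm_le_pi_norm a i)
  have hM : |x m - a m| ≤ a m * (1 + exp (N * K)) := by
    have := mul_pos (ha m) (exp_pos (N * K))
    rcases le_or_gt (x m) (a m) with hle | hlt
    · rw [abs_of_nonpos (by linarith)]
      linarith [hx m]
    · rw [abs_of_pos (by linarith)] at hmterm ⊢
      have hlog : log (x m) - log (a m) ≤ N * K :=
        le_of_mul_le_mul_left (by linarith) (sub_pos.2 hlt)
      have : x m ≤ a m * exp (N * K) := by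
        rw [← exp_log (hx m), ← exp_log (ha m), ← exp_add]
        exact exp_le_exp.2 (by linarith)
      linarith [ha m]
  calc x j ≤ a j + |x m - a m| := by linarith [le_abs_self (x j - a j), hm j]
    _ ≤ ‖a‖ + ‖a‖ * (1 + exp (N * K)) :=
        add_le_add (hnorm j) (hM.trans (mul_le_mul_of_nonneg_right (hnorm m) (by positivity)))
    _ = ‖a‖ * (2 + exp (N * K)) := by ring

namespace ReactionNetwork

noncomputable def massActionField (rn : ReactionNetwork N)
    (k : (Fin N → ℝ) × (Fin N → ℝ) → ℝ) (x : Fin N → ℝ) : Fin N → ℝ :=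
  ∑ r ∈ rn.reactions, (k r * vpow x r.1) • (r.2 - r.1)

theorem massActionField_mem_stoichSubspace (rn : ReactionNetwork N)
    (k : (Fin N → ℝ) × (Fin N → ℝ) → ℝ) (x : Fin N → ℝ) :
    rn.massActionField k x ∈ rn.stoichSubspace :=
  Submodule.sum_mem _ fun r hr => Submodule.smul_mem _ _ (Submodule.subset_span ⟨r, hr, rfl⟩)

theorem massActionField_dotProduct_log (rn : ReactionNetwork N)
    (k : (Fin N → ℝ) × (Fin N → ℝ) → ℝ) {x : Fin N → ℝ} (hx : ∀ i, 0 < x i) :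
    rn.massActionField k x ⬝ᵥ (log ∘ x) = ∑ r ∈ rn.reactions,
      k r * exp (r.1 ⬝ᵥ (log ∘ x)) * (r.2 ⬝ᵥ (log ∘ x) - r.1 ⬝ᵥ (log ∘ x)) := by
  simp only [massActionField, sum_dotProduct, smul_dotProduct, sub_dotProduct, smul_eq_mul,
    vpow_eq_exp_dotProduct hx]

theorem exists_neg_le_dotProduct_log (rn : ReactionNetwork N) {δ : ℝ} (hδ : 0 < δ) :
    ∃ C, ∀ x : Fin N → ℝ, (∀ i, δ ≤ x i) → ∀ y ∈ rn.complexes, -C ≤ y ⬝ᵥ (log ∘ x) := by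
  have hy : ∀ y ∈ rn.complexes, ∀ i, 0 ≤ y i := fun y hy i => by
    obtain ⟨m, hm⟩ := rn.complexes_nonneg_int y hy i
    exact hm ▸ m.cast_nonneg
  refine ⟨∑ y ∈ rn.complexes, ∑ i, y i * |log δ|, fun x hx y hyC => ?_⟩
  have hle : ∑ i, y i * |log δ| ≤ ∑ y ∈ rn.complexes, ∑ i, y i * |log δ| :=
    Finset.single_le_sum (f := fun y => ∑ i, y i * |log δ|)
      (fun z hz => Finset.sum_nonneg fun i _ => mul_nonneg (hy z hz i) (abs_nonneg _)) hyC
  have hterm : ∀ i, -(y i * |log δ|) ≤ y i * log (x i) := fun i => by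
    rw [← mul_neg]
    exact mul_le_mul_of_nonneg_left
      ((neg_abs_le _).trans (log_le_log hδ (hx i))) (hy y hyC i)
  have := Finset.sum_le_sum fun i (_ : i ∈ Finset.univ) => hterm i
  rw [Finset.sum_neg_distrib] at this
  simp only [dotProduct, Function.comp_apply]
  linarith

theorem exists_forall_le_of_abs_dotProduct_log_le (rn : ReactionNetwork N)
    {a : Fin N → ℝ} (ha : ∀ i, 0 < a i) {b : ℝ} (hb : 0 ≤ b) :
    ∃ B, ∀ x : Fin N → ℝ, (∀ i, 0 < x i) → x - a ∈ rn.stoichSubspace →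
      (∀ r ∈ rn.reactions, |(r.2 - r.1) ⬝ᵥ (log ∘ x)| ≤ b) → ∀ j, x j ≤ B := by
  let A : Matrix rn.reactions (Fin N) ℝ := Matrix.of fun r => r.1.2 - r.1.1
  obtain ⟨C, hC, hA⟩ := A.mulVecLin.exists_preimage_norm_le
  refine ⟨_, fun x hx hxa hxb => le_of_sum_sub_mul_log_sub_le hx ha
    (K := C * b + ‖log ∘ a‖) (by positivity) ?_⟩
  obtain ⟨p, hp, hpn⟩ := hA (log ∘ x)
  simp only [Matrix.mulVecLin_apply] at hp hpn
  have horth : ∀ s ∈ rn.stoichSubspace, s ⬝ᵥ (log ∘ x - p) = 0 := fun s hs => by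
    induction hs using Submodule.span_induction with
    | mem s hs =>
      obtain ⟨r, hr, rfl⟩ := hs
      have : (r.2 - r.1) ⬝ᵥ p = (r.2 - r.1) ⬝ᵥ (log ∘ x) := congrFun hp ⟨r, hr⟩
      rw [dotProduct_sub, this, sub_self]
    | zero => exact zero_dotProduct _
    | add s t _ _ hs ht => rw [add_dotProduct, hs, ht, add_zero]
    | smul c s _ hs => rw [smul_dotProduct, hs, smul_zero]
  have hp : ‖p‖ ≤ C * b := hpn.trans <| mul_le_mul_of_nonneg_left
    ((pi_norm_le_iff_of_nonneg hb).2 fun r => hxb r.1 r.2) hC.le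
  -- `log x = p + (log x - p)` with `p` bounded and `log x - p ∈ Sᗮ`, while `x - a ∈ S`
  have hid : (x - a) ⬝ᵥ (log ∘ x - log ∘ a) = (x - a) ⬝ᵥ (p - log ∘ a) := by
    rw [show log ∘ x - log ∘ a = (log ∘ x - p) + (p - log ∘ a) by abel, dotProduct_add,
      horth _ hxa, zero_add]
  calc ∑ i, (x i - a i) * (log (x i) - log (a i)) = (x - a) ⬝ᵥ (p - log ∘ a) := hid
    _ ≤ ∑ i, |x i - a i| * (C * b + ‖log ∘ a‖) := Finset.sum_le_sum fun i _ => by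
        refine (le_abs_self _).trans ?_
        rw [abs_mul]
        refine mul_le_mul_of_nonneg_left ?_ (abs_nonneg _)
        exact (norm_le_pi_norm (p - log ∘ a) i).trans ((norm_sub_le _ _).trans (by linarith))
    _ = (C * b + ‖log ∘ a‖) * ∑ i, |x i - a i| := by rw [Finset.mul_sum]; simp only [mul_comm]

theorem exists_reaction_across_gap (rn : ReactionNetwork N) (hwr : rn.WeaklyReversible)
    (hsingle : rn.SingleLinkageClass) (θ : (Fin N → ℝ) → ℝ) {L : ℕ → ℝ} (hL : Monotone L)
    (hL₀ : 0 ≤ L 0) {r : (Fin N → ℝ) × (Fin N → ℝ)} (hr : r ∈ rn.reactions)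
    (hrL : L rn.complexes.card < |θ r.2 - θ r.1|) :
    ∃ y₀ ∈ rn.complexes, (∀ y ∈ rn.complexes, θ y ≤ θ y₀) ∧
      ∃ n, ∃ r₀ ∈ rn.reactions, θ y₀ - θ r₀.1 ≤ L n ∧ L (n + 1) < θ y₀ - θ r₀.2 := by
  have hr₁ := rn.source_mem r hr
  have hr₂ := rn.target_mem r hr
  obtain ⟨y₀, hy₀, hmax⟩ := rn.complexes.exists_max_image θ ⟨r.1, hr₁⟩
  obtain ⟨n, hn, hgap⟩ := rn.complexes.exists_lt_card_forall_le_or_lt (fun y => θ y₀ - θ y) hL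
    hy₀ (by simpa using hL₀)
  obtain ⟨z, hz, hzn⟩ : ∃ z ∈ rn.complexes, ¬θ y₀ - θ z ≤ L n := by
    by_contra! h
    have : |θ r.2 - θ r.1| ≤ L n :=
      abs_le.2 ⟨by linarith [h r.2 hr₂, hmax r.1 hr₁], by linarith [h r.1 hr₁, hmax r.2 hr₂]⟩
    linarith [hL hn.le]
  obtain ⟨y, y', hyy', hy, hy'⟩ := (hwr y₀ hy₀ z hz (hsingle y₀ hy₀ z hz)).exists_rel_not
    (p := fun y => θ y₀ - θ y ≤ L n) (by simpa using hL₀.trans (hL n.zero_le)) hzn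
  exact ⟨y₀, hy₀, hmax, n, (y, y'), hyy', hy, (hgap y' (rn.target_mem _ hyy')).resolve_left hy'⟩

theorem exists_massActionField_dotProduct_log_le (rn : ReactionNetwork N)
    (hwr : rn.WeaklyReversible) (hsingle : rn.SingleLinkageClass) {η δ : ℝ} (hη : 0 < η)
    (hδ : 0 < δ) {a : Fin N → ℝ} (ha : ∀ i, 0 < a i) (M : ℝ) :
    ∃ R, ∀ (x : Fin N → ℝ) (k : (Fin N → ℝ) × (Fin N → ℝ) → ℝ), (∀ i, δ ≤ x i) →
      x - a ∈ rn.stoichSubspace → (∃ i, R ≤ x i) →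
      (∀ r ∈ rn.reactions, η ≤ k r ∧ k r ≤ 1 / η) →
      rn.massActionField k x ⬝ᵥ (log ∘ x) ≤ -M := by
  -- `F c` is the gap below a tier of width `c` that `sum_mul_exp_mul_sub_le_neg_exp` asks for
  set F : ℝ → ℝ := fun c => c + exp c * (rn.reactions.card / η + 1) / η
  set L : ℕ → ℝ := fun n => F^[n] 0
  have hL : Monotone L := monotone_nat_of_le_succ fun n => by
    simp only [L, Function.iterate_succ_apply']
    exact le_add_of_nonneg_right (by positivity)
  have hL₀ : ∀ n, 0 ≤ L n := fun n => hL n.zero_le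
  obtain ⟨C₀, hC₀⟩ := rn.exists_neg_le_dotProduct_log hδ
  -- a reaction pairing above `b` rules out a single tier of width `L #𝒞` and forces `θ y₀ > |M|`
  set b := L rn.complexes.card + |M| + |C₀|
  obtain ⟨B, hB⟩ := rn.exists_forall_le_of_abs_dotProduct_log_le ha (b := b)
    (add_nonneg (add_nonneg (hL₀ _) (abs_nonneg M)) (abs_nonneg C₀))
  refine ⟨B + 1, fun x k hxδ hxa ⟨i, hi⟩ hk => ?_⟩
  have hx : ∀ i, 0 < x i := fun i => hδ.trans_le (hxδ i)
  set θ : (Fin N → ℝ) → ℝ := fun y => y ⬝ᵥ (log ∘ x)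
  obtain ⟨r, hr, hrb⟩ : ∃ r ∈ rn.reactions, b < |θ r.2 - θ r.1| := by
    by_contra! h
    linarith [hB x hx hxa (fun r hr => by simpa only [θ, sub_dotProduct] using h r hr) i]
  obtain ⟨y₀, -, hmax, n, r₀, hr₀, hsrc, htgt⟩ := rn.exists_reaction_across_gap hwr hsingle θ hL
    (hL₀ 0) hr (by linarith [abs_nonneg M, abs_nonneg C₀])
  have hM : M < exp (θ y₀) := by
    have h₁ : -C₀ ≤ θ r.1 := hC₀ x hxδ r.1 (rn.source_mem r hr)
    have h₂ : -C₀ ≤ θ r.2 := hC₀ x hxδ r.2 (rn.target_mem r hr)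
    have : |θ r.2 - θ r.1| ≤ θ y₀ + |C₀| := abs_le.2
      ⟨by linarith [hmax r.1 (rn.source_mem r hr), le_abs_self C₀],
        by linarith [hmax r.2 (rn.target_mem r hr), le_abs_self C₀]⟩
    linarith [add_one_le_exp (θ y₀), le_abs_self M, hL₀ rn.complexes.card]
  rw [rn.massActionField_dotProduct_log k hx]
  refine (sum_mul_exp_mul_sub_le_neg_exp rn.reactions hη hk
    (fun r hr => hmax r.2 (rn.target_mem r hr)) hr₀ hsrc ?_).trans (by linarith)
  simpa only [L, Function.iterate_succ_apply'] using htgt.le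

theorem exists_eventually_le (rn : ReactionNetwork N) (hwr : rn.WeaklyReversible)
    (hsingle : rn.SingleLinkageClass) {η δ : ℝ} {κ : (Fin N → ℝ) × (Fin N → ℝ) → ℝ → ℝ}
    (hκ : rn.BoundedKinetics κ η) (hδ : 0 < δ) {a : Fin N → ℝ} (ha : ∀ i, 0 < a i) :
    ∃ B, ∀ φ : ℝ → Fin N → ℝ, φ 0 - a ∈ rn.stoichSubspace → (∀ t, 0 ≤ t → ∀ i, 0 < φ t i) →
      (∀ t, 0 ≤ t →
        HasDerivWithinAt φ (rn.massActionField (fun r => κ r t) (φ t)) (Ici 0) t) →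
      (∀ᶠ t in atTop, ∀ i, δ ≤ φ t i) → ∀ᶠ t in atTop, ∀ i, φ t i ≤ B := by
  obtain ⟨hη, hκ⟩ := hκ
  obtain ⟨R, hR⟩ := rn.exists_massActionField_dotProduct_log_le hwr hsingle hη hδ ha 1
  refine ⟨N * R ^ 2 + 1 + N * exp 1, fun φ hφa hpos hode hφδ => ?_⟩
  obtain ⟨T₀, hT₀⟩ := eventually_atTop.1 (hφδ.and (eventually_ge_atTop 0))
  have hclass : ∀ t, 0 ≤ t → φ t - a ∈ rn.stoichSubspace := fun t ht => by
    simpa only [sub_add_sub_cancel] using add_mem (rn.stoichSubspace.sub_mem_of_hasDerivWithinAt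
      hode (fun s _ => rn.massActionField_mem_stoichSubspace _ _) ht) hφa
  have hV : ∀ᶠ t in atTop, freeEnergy (φ t) ≤ N * R ^ 2 + 1 := by
    refine eventually_le_of_hasDerivWithinAt_le_neg_one (T₀ := T₀) (A := -(N * exp 1))
      (fun t ht => (hasDerivWithinAt_freeEnergy_comp (hode t (hT₀ t ht).2)
        (hpos t (hT₀ t ht).2)).mono (Ici_subset_Ici.2 (hT₀ T₀ le_rfl).2))
      (fun t ht => neg_le_freeEnergy (hpos t (hT₀ t ht).2)) fun t ht hVt => ?_
    have ht₀ := (hT₀ t ht).2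
    obtain ⟨i, hi⟩ : ∃ i, R ≤ φ t i := by
      by_contra! h
      linarith [freeEnergy_le (hpos t ht₀) fun i => (h i).le]
    exact hR (φ t) (fun r => κ r t) (hT₀ t ht).1 (hclass t ht₀) ⟨i, hi⟩ fun r hr =>
      ⟨(hκ r hr t ht₀).1.le, (hκ r hr t ht₀).2.le⟩
  filter_upwards [hV, eventually_ge_atTop 0] with t hVt ht i
  linarith [le_freeEnergy_add (hpos t ht) i]

end ReactionNetwork

end

/-- **Corollary (permanence under uniform persistence).**  Let `(𝒞, ℛ)` be a weakly
reversible, single linkage class reaction network on `N` species with bounded mass-action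
kinetics (`η < κ_k(t) < 1/η` for `t ≥ 0`), let `P = (x_* + S) ∩ ℝ^N_{>0}` be a positive
stoichiometric compatibility class, and for each `x_0 ∈ P` let `φ(·, x_0)` be a
differentiable trajectory of the system starting at `x_0`.  If there is `δ > 0` with
`liminf_{t→∞} φ_i(t, x_0) > δ` for all `i` and all `x_0 ∈ P`, then there is `ρ > 0` such
that for every `x_0 ∈ P` and every `i`,
`ρ < liminf_{t→∞} φ_i(t, x_0) ≤ limsup_{t→∞} φ_i(t, x_0) < 1/ρ`. -/
theorem permanence_of_uniform_persistence
    {N : ℕ} (rn : ReactionNetwork N)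
    (hwr : rn.WeaklyReversible) (hsingle : rn.SingleLinkageClass)
    (η : ℝ) (κ : ((Fin N → ℝ) × (Fin N → ℝ)) → ℝ → ℝ)
    (hκ : rn.BoundedKinetics κ η)
    (xstar : Fin N → ℝ) (hxstar : ∀ i, 0 < xstar i)
    (Pcls : Set (Fin N → ℝ))
    (hPcls : Pcls = {x : Fin N → ℝ | (∀ i, 0 < x i) ∧ x - xstar ∈ rn.stoichSubspace})
    (φ : (Fin N → ℝ) → ℝ → Fin N → ℝ)
    (hφ0 : ∀ x₀ ∈ Pcls, φ x₀ 0 = x₀)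
    (hφpos : ∀ x₀ ∈ Pcls, ∀ t : ℝ, 0 ≤ t → ∀ i, 0 < φ x₀ t i)
    (hφode : ∀ x₀ ∈ Pcls, ∀ t : ℝ, 0 ≤ t →
      HasDerivWithinAt (φ x₀)
        (∑ r ∈ rn.reactions, (κ r t * vpow (φ x₀ t) r.1) • (r.2 - r.1))
        (Set.Ici (0 : ℝ)) t)
    (δ : ℝ) (hδ : 0 < δ)
    (hpersist : ∀ x₀ ∈ Pcls, ∀ i,
      (δ : EReal) < Filter.liminf (fun t : ℝ => ((φ x₀ t i : ℝ) : EReal)) atTop) :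
    ∃ ρ : ℝ, 0 < ρ ∧ ∀ x₀ ∈ Pcls, ∀ i,
      (ρ : EReal) < Filter.liminf (fun t : ℝ => ((φ x₀ t i : ℝ) : EReal)) atTop ∧
      Filter.limsup (fun t : ℝ => ((φ x₀ t i : ℝ) : EReal)) atTop
        < ((1 / ρ : ℝ) : EReal) := by
  obtain ⟨B, hB⟩ := rn.exists_eventually_le hwr hsingle hκ hδ hxstar
  set ρ := min δ (1 / (|B| + 1))
  have hρ : 0 < ρ := lt_min hδ (by positivity)
  have hBρ : B < 1 / ρ := by
    have : |B| + 1 ≤ 1 / ρ := (le_one_div (by positivity) hρ).2 (min_le_right _ _)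
    linarith [le_abs_self B]
  refine ⟨ρ, hρ, fun x₀ hx₀ i => ⟨?_, ?_⟩⟩
  · exact (EReal.coe_le_coe_iff.2 (min_le_left _ _)).trans_lt (hpersist x₀ hx₀ i)
  have hclass : φ x₀ 0 - xstar ∈ rn.stoichSubspace := by
    rw [hφ0 x₀ hx₀]
    exact (Set.ext_iff.1 hPcls x₀ |>.1 hx₀).2
  have hδφ : ∀ᶠ t in atTop, ∀ j, δ ≤ φ x₀ t j := eventually_all.2 fun j =>
    (eventually_lt_of_lt_liminf (hpersist x₀ hx₀ j)).mono fun t ht =>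
      (EReal.coe_lt_coe_iff.1 ht).le
  refine lt_of_le_of_lt (limsup_le_of_le (by isBoundedDefault) ?_) (EReal.coe_lt_coe_iff.2 hBρ)
  filter_upwards [hB (φ x₀) hclass (hφpos x₀ hx₀) (hφode x₀ hx₀) hδφ] with t ht
  exact EReal.coe_le_coe_iff.2 (ht i)
end
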